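/- arXiv:2505.00653 — 7 statements merged into one kernel-verified Lean document; each statement's English description precedes it below -/
import Mathlib

section
/- For every real number α and every real N ≥ 1, there exists a positive integer t with t ≤ 2√N and t + N·‖tα‖ ≤ 2√N, where ‖x‖ denotes the distance from x to the nearest integer. In particular, T_N(α) := min over positive integers t of (t + N‖tα‖) satisfies T_N(α) ≤ 2√N. -/
/-- For every real `α` and every real `N ≥ 1`, there exists a positive integer `t` with
`t ≤ 2√N` and `t + N·‖tα‖ ≤ 2√N`, where `‖x‖` is the distance from `x` to the nearest
integer.  In particular `T_N(α) ≤ 2√N`. -/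
theorem pigeonhole_TN_bound (α N : ℝ) (hN : 1 ≤ N) :
    ∃ t : ℕ, 0 < t ∧ (t : ℝ) ≤ 2 * Real.sqrt N ∧
      (t : ℝ) + N * |(t : ℝ) * α - round ((t : ℝ) * α)| ≤ 2 * Real.sqrt N := by
  set s := Real.sqrt N with hs
  have hs1 : 1 ≤ s := by
    rw [hs, show (1:ℝ) = Real.sqrt 1 by simp]
    exact Real.sqrt_le_sqrt hN
  have hs0 : 0 < s := lt_of_lt_of_le one_pos hs1
  set n : ℕ := ⌊s⌋₊ with hn
  have hn_pos : 0 < n := Nat.floor_pos.mpr hs1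
  obtain ⟨k, hk0, hkn, hk⟩ := Real.exists_nat_abs_mul_sub_round_le α hn_pos
  refine ⟨k, hk0, ?_, ?_⟩
  · calc (k : ℝ) ≤ n := by exact_mod_cast hkn
      _ ≤ s := Nat.floor_le hs0.le
      _ ≤ 2 * s := by linarith
  · have h1 : (k : ℝ) ≤ s := le_trans (by exact_mod_cast hkn) (Nat.floor_le hs0.le)
    have h2 : N * |(k : ℝ) * α - round ((k : ℝ) * α)| ≤ N / (n + 1) := by
      have := mul_le_mul_of_nonneg_left hk (by linarith : (0:ℝ) ≤ N)
      simpa [div_eq_mul_inv] using this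
    have h3 : N / (n + 1) ≤ s := by
      rw [div_le_iff₀ (by positivity)]
      have hsn : s ≤ (n : ℝ) + 1 := (Nat.lt_floor_add_one s).le
      calc N = s * s := (Real.mul_self_sqrt (by linarith)).symm
        _ ≤ s * ((n:ℝ) + 1) := by nlinarith
      
    linarith
end

section
/- For all α, β ∈ ℝ and N > 0, one has T_N(α + β) ≤ 2·(1 + N·‖β‖)·T_N(α), where T_N(γ) := inf over positive integers t of (t + N·‖tγ‖) and ‖x‖ is the distance to the nearest integer. -/
/-- `‖x‖`: the distance from a real number to the nearest integer. -/
noncomputable def nearestIntDist (x : ℝ) : ℝ := |x - round x|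

/-- `T_N(α) := inf over positive integers t of (t + N·‖tα‖)`. -/
noncomputable def TN (N α : ℝ) : ℝ := ⨅ t : ℕ+, ((t : ℝ) + N * nearestIntDist ((t : ℝ) * α))

lemma nearestIntDist_nonneg (x : ℝ) : 0 ≤ nearestIntDist x := abs_nonneg _

lemma nearestIntDist_le (x : ℝ) (n : ℤ) : nearestIntDist x ≤ |x - n| := by
  rcases eq_or_ne n (round x) with h | h
  · simp [nearestIntDist, h]
  · have h1 : (1 : ℝ) ≤ |(round x : ℝ) - n| := by
      have : round x - n ≠ 0 := sub_ne_zero.mpr (Ne.symm h)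
      have := Int.one_le_abs this
      calc (1:ℝ) ≤ |(round x - n : ℤ)| := by exact_mod_cast this
        _ = |(round x : ℝ) - n| := by push_cast; ring_nf
    have h2 : |x - round x| ≤ 1 / 2 := abs_sub_round x
    have h3 : |(round x : ℝ) - n| ≤ |(round x : ℝ) - x| + |x - n| := abs_sub_le _ _ _
    have h4 : |(round x : ℝ) - x| = |x - round x| := abs_sub_comm _ _
    have : nearestIntDist x = |x - round x| := rfl
    linarith

lemma nearestIntDist_add_le (x y : ℝ) :
    nearestIntDist (x + y) ≤ nearestIntDist x + nearestIntDist y := by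
  have h := nearestIntDist_le (x + y) (round x + round y)
  refine h.trans ?_
  have : x + y - ((round x + round y : ℤ) : ℝ) = (x - round x) + (y - round y) := by
    push_cast; ring
  rw [this]
  exact abs_add_le _ _

lemma nearestIntDist_nat_mul (t : ℕ) (x : ℝ) :
    nearestIntDist ((t : ℝ) * x) ≤ (t : ℝ) * nearestIntDist x := by
  have h := nearestIntDist_le ((t : ℝ) * x) (t * round x)
  refine h.trans ?_
  have : (t : ℝ) * x - ((t * round x : ℤ) : ℝ) = (t : ℝ) * (x - round x) := by
    push_cast; ring
  rw [this, abs_mul, abs_of_nonneg (by positivity : (0:ℝ) ≤ (t:ℝ))]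
  exact le_rfl

/-- For all `α, β ∈ ℝ` and `N > 0`, one has `T_N(α + β) ≤ 2·(1 + N‖β‖)·T_N(α)`. -/
theorem TN_add_le (α β N : ℝ) (hN : 0 < N) :
    TN N (α + β) ≤ 2 * (1 + N * nearestIntDist β) * TN N α := by
  set c : ℝ := 1 + N * nearestIntDist β with hc_def
  have hc : 0 < c := by
    have := nearestIntDist_nonneg β
    have : 0 ≤ N * nearestIntDist β := by positivity
    simp only [hc_def]; linarith
  have hbdd : ∀ γ : ℝ, BddBelow (Set.range fun t : ℕ+ =>
      ((t : ℝ) + N * nearestIntDist ((t : ℝ) * γ))) := by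
    intro γ
    refine ⟨0, ?_⟩
    rintro x ⟨t, rfl⟩
    have h1 : (1 : ℝ) ≤ (t : ℝ) := by exact_mod_cast t.one_le
    have h2 : 0 ≤ N * nearestIntDist ((t : ℝ) * γ) := by
      have := nearestIntDist_nonneg ((t : ℝ) * γ); positivity
    dsimp only
    linarith
  have hkey : ∀ t : ℕ+, TN N (α + β) ≤ c * ((t : ℝ) + N * nearestIntDist ((t : ℝ) * α)) := by
    intro t
    have h1 : TN N (α + β) ≤ (t : ℝ) + N * nearestIntDist ((t : ℝ) * (α + β)) :=
      ciInf_le (hbdd (α + β)) t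
    have h2 : nearestIntDist ((t : ℝ) * (α + β)) ≤
        nearestIntDist ((t : ℝ) * α) + nearestIntDist ((t : ℝ) * β) := by
      have := nearestIntDist_add_le ((t : ℝ) * α) ((t : ℝ) * β)
      rw [mul_add]
      exact this
    have h3 : nearestIntDist ((t : ℝ) * β) ≤ (t : ℝ) * nearestIntDist β := by
      have := nearestIntDist_nat_mul (t : ℕ) β
      exact_mod_cast this
    have ht1 : (1 : ℝ) ≤ (t : ℝ) := by exact_mod_cast t.one_le
    have hd1 : 0 ≤ nearestIntDist ((t : ℝ) * α) := nearestIntDist_nonneg _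
    have hd2 : 0 ≤ nearestIntDist β := nearestIntDist_nonneg _
    have : (t : ℝ) + N * nearestIntDist ((t : ℝ) * (α + β)) ≤
        c * ((t : ℝ) + N * nearestIntDist ((t : ℝ) * α)) := by
      simp only [hc_def]
      nlinarith [mul_nonneg hN.le hd1, mul_nonneg hN.le hd2]
    linarith
  have hmain : TN N (α + β) ≤ c * TN N α := by
    have hdiv : TN N (α + β) / c ≤ TN N α := by
      refine le_ciInf fun t => ?_
      rw [div_le_iff₀ hc]
      calc TN N (α + β) ≤ c * ((t : ℝ) + N * nearestIntDist ((t : ℝ) * α)) := hkey t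
        _ = ((t : ℝ) + N * nearestIntDist ((t : ℝ) * α)) * c := mul_comm _ _
    calc TN N (α + β) = TN N (α + β) / c * c := by field_simp
      _ ≤ TN N α * c := by exact mul_le_mul_of_nonneg_right hdiv hc.le
      _ = c * TN N α := mul_comm _ _
  have hTN_nonneg : 0 ≤ TN N α := by
    refine le_ciInf fun t => ?_
    have h1 : (1 : ℝ) ≤ (t : ℝ) := by exact_mod_cast t.one_le
    have h2 : 0 ≤ N * nearestIntDist ((t : ℝ) * α) := by
      have := nearestIntDist_nonneg ((t : ℝ) * α); positivity
    linarith
  nlinarith [mul_nonneg hc.le hTN_nonneg]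
end

section
/- Let D ≥ 1 be a real number, and let d = p₁⋯p_r be a product of primes p₁ ≥ p₂ ≥ ⋯ ≥ p_r such that p₁⋯p_{j−1}·p_j² ≤ D for every 1 ≤ j ≤ r. Then for any reals D₁, D₂ ≥ 1 with D₁·D₂ ≥ D, there exists a factorization d = d₁·d₂ into positive integers with d₁ ≤ D₁ and d₂ ≤ D₂. -/
/-!
Take the primes one at a time, keeping a factorization `d₁ d₂` of the product of those
taken so far with `d₁ ≤ D₁` and `d₂ ≤ D₂`. For the next prime `p`,
`(d₁ p) (d₂ p) = d₁ d₂ p² ≤ D ≤ D₁ D₂`, so `d₁ p ≤ D₁` or `d₂ p ≤ D₂`, and `p` is appended to a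
factor that has room.
-/

open Finset

lemma le_or_le_of_mul_le_mul_of_nonneg {α : Type*} [Semiring α] [LinearOrder α]
    [IsStrictOrderedRing α] {x y a b : α} (ha : 0 ≤ a) (hb : 0 ≤ b) (h : x * y ≤ a * b) :
    x ≤ a ∨ y ≤ b := by
  by_contra! hlt
  exact (mul_lt_mul'' hlt.1 hlt.2 ha hb).not_ge h

def SplitsBelow (D₁ D₂ : ℝ) (n : ℕ) : Prop :=
  ∃ d₁ d₂ : ℕ, 0 < d₁ ∧ 0 < d₂ ∧ d₁ * d₂ = n ∧ (d₁ : ℝ) ≤ D₁ ∧ (d₂ : ℝ) ≤ D₂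

namespace SplitsBelow

variable {D₁ D₂ : ℝ}

lemma one (hD₁ : 1 ≤ D₁) (hD₂ : 1 ≤ D₂) : SplitsBelow D₁ D₂ 1 :=
  ⟨1, 1, one_pos, one_pos, rfl, by simpa using hD₁, by simpa using hD₂⟩

lemma mul {n a : ℕ} (hn : SplitsBelow D₁ D₂ n) (ha : 0 < a)
    (hle : (n : ℝ) * (a : ℝ) ^ 2 ≤ D₁ * D₂) : SplitsBelow D₁ D₂ (n * a) := by
  obtain ⟨d₁, d₂, h₁, h₂, rfl, hd₁, hd₂⟩ := hn
  have hprod : ((d₁ * a : ℕ) : ℝ) * ((d₂ * a : ℕ) : ℝ) ≤ D₁ * D₂ := by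
    calc ((d₁ * a : ℕ) : ℝ) * ((d₂ * a : ℕ) : ℝ) = ((d₁ * d₂ : ℕ) : ℝ) * (a : ℝ) ^ 2 := by
          push_cast; ring
      _ ≤ D₁ * D₂ := hle
  rcases le_or_le_of_mul_le_mul_of_nonneg ((Nat.cast_nonneg _).trans hd₁)
      ((Nat.cast_nonneg _).trans hd₂) hprod with h | h
  · exact ⟨d₁ * a, d₂, Nat.mul_pos h₁ ha, h₂, by ring, h, hd₂⟩
  · exact ⟨d₁, d₂ * a, h₁, Nat.mul_pos h₂ ha, by ring, hd₁, h⟩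

theorem prod_of_prefix_mul_sq_le {ι : Type*} [LinearOrder ι] (f : ι → ℕ) (s : Finset ι)
    (hD₁ : 1 ≤ D₁) (hD₂ : 1 ≤ D₂) (hf : ∀ i ∈ s, 0 < f i)
    (hprefix : ∀ j ∈ s, ((∏ i ∈ s.filter (· < j), f i : ℕ) : ℝ) * (f j : ℝ) ^ 2 ≤ D₁ * D₂) :
    SplitsBelow D₁ D₂ (∏ i ∈ s, f i) := by
  induction s using Finset.induction_on_max with
  | empty => simpa using one hD₁ hD₂
  | insert a s hlt ih =>
    have ha : a ∉ s := fun h ↦ (hlt a h).false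
    have hbelow : (insert a s).filter (· < a) = s := by
      rw [filter_insert, if_neg (lt_irrefl a), filter_true_of_mem hlt]
    have hfilter : ∀ j ∈ s, (insert a s).filter (· < j) = s.filter (· < j) := fun j hj ↦ by
      rw [filter_insert, if_neg (hlt j hj).not_gt]
    rw [prod_insert ha, mul_comm]
    refine (ih (fun i hi ↦ hf i (mem_insert_of_mem hi)) fun j hj ↦ ?_).mul
      (hf a (mem_insert_self a s)) ?_
    · rw [← hfilter j hj]
      exact hprefix j (mem_insert_of_mem hj)
    · simpa only [hbelow] using hprefix a (mem_insert_self a s)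

end SplitsBelow

theorem wellFactorable_two_factor_general (D : ℝ) (r : ℕ) (p : Fin r → ℕ)
    (hp : ∀ i, (p i).Prime)
    (hwell : ∀ j : Fin r,
      ((∏ i ∈ Finset.univ.filter (· < j), p i : ℕ) : ℝ) * (p j : ℝ) ^ 2 ≤ D)
    (D₁ D₂ : ℝ) (hD₁ : 1 ≤ D₁) (hD₂ : 1 ≤ D₂) (hDD : D ≤ D₁ * D₂) :
    ∃ d₁ d₂ : ℕ, 0 < d₁ ∧ 0 < d₂ ∧ d₁ * d₂ = ∏ i, p i ∧
      (d₁ : ℝ) ≤ D₁ ∧ (d₂ : ℝ) ≤ D₂ :=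
  SplitsBelow.prod_of_prefix_mul_sq_le p univ hD₁ hD₂ (fun i _ ↦ (hp i).pos)
    fun j _ ↦ (hwell j).trans hDD

/-- Greedy two-factor factorization in the well-factorable support: if
`d = p₁⋯p_r` with primes `p₁ ≥ ⋯ ≥ p_r` and `p₁⋯p_{j−1}·p_j² ≤ D` for all `j ≤ r`,
then for any `D₁, D₂ ≥ 1` with `D ≤ D₁·D₂` there is a factorization `d = d₁·d₂` into
positive integers with `d₁ ≤ D₁` and `d₂ ≤ D₂`. -/
theorem wellFactorable_two_factor (D : ℝ) (hD : 1 ≤ D) (r : ℕ) (p : Fin r → ℕ)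
    (hp : ∀ i, (p i).Prime) (hmono : ∀ i j : Fin r, i ≤ j → p j ≤ p i)
    (hwell : ∀ j : Fin r,
      ((∏ i ∈ Finset.univ.filter (· < j), p i : ℕ) : ℝ) * (p j : ℝ) ^ 2 ≤ D)
    (D₁ D₂ : ℝ) (hD₁ : 1 ≤ D₁) (hD₂ : 1 ≤ D₂) (hDD : D ≤ D₁ * D₂) :
    ∃ d₁ d₂ : ℕ, 0 < d₁ ∧ 0 < d₂ ∧ d₁ * d₂ = ∏ i, p i ∧
      (d₁ : ℝ) ≤ D₁ ∧ (d₂ : ℝ) ≤ D₂ :=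
  wellFactorable_two_factor_general D r p hp hwell D₁ D₂ hD₁ hD₂ hDD
end

section
/- Let 0 < δ < 10⁻⁵, x > 1, ϑ ∈ [1/2, 5/8], x^{2δ} ≤ N ≤ x^{1/3+δ}, 1 ≤ D ≤ x^{ϑ−2δ}, and suppose x^{(5ϑ−2)/3 − δ} ≤ N. Then any d = p₁⋯p_r with primes p₁ ≥ ⋯ ≥ p_r satisfying p₁⋯p_{j−1}p_j² ≤ D for all j ≤ r admits a factorization d = d₁d₂d₃ into positive integers with d₁ ≤ N x^{−δ}, N² d₂ d₃² ≤ x^{1−δ}, and N² d₂⁵ d₃² ≤ x^{2−δ}. -/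
/-!
Split the bound as `D ≤ x ^ (ϑ - 2δ) = D₁ D₂` with `D₁ = N x ^ (-δ)`, `D₂ = x ^ (ϑ - δ) / N`, and
distribute the primes greedily: `p_j` joins `d₁` when `d₁ p_j ≤ D₁`; otherwise
`d₁ d₂ p_j² ≤ D₁ D₂ < d₁ p_j D₂` forces `d₂ p_j ≤ D₂`. Taking `d₃ = 1` and writing `N = x ^ n`,
the three required inequalities become linear constraints on `n`, implied by the hypotheses.
-/

open Finset Real

section Greedy

variable {K : Type*} [CommRing K] [LinearOrder K] [IsStrictOrderedRing K]

lemma mul_le_or_mul_le_of_mul_mul_sq_le {a b q A B : K} (ha : 0 < a) (hq : 0 < q) (hB : 0 ≤ B)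
    (h : a * b * q ^ 2 ≤ A * B) : a * q ≤ A ∨ b * q ≤ B := by
  by_contra! hlt
  have haq : 0 < a * q := mul_pos ha hq
  nlinarith [mul_le_mul_of_nonneg_right hlt.1.le hB, mul_lt_mul_of_pos_left hlt.2 haq]

theorem exists_mul_eq_prod_le_le_of_prod_Iio_mul_sq_le {r : ℕ} (p : Fin r → ℕ)
    (hp : ∀ i, 0 < p i) {D₁ D₂ : K} (h₁ : 1 ≤ D₁) (h₂ : 1 ≤ D₂)
    (h : ∀ j, ((∏ i < j, p i : ℕ) : K) * (p j : K) ^ 2 ≤ D₁ * D₂) :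
    ∃ d₁ d₂ : ℕ, d₁ * d₂ = ∏ i, p i ∧ (d₁ : K) ≤ D₁ ∧ (d₂ : K) ≤ D₂ := by
  induction r with
  | zero => exact ⟨1, 1, by simp, by simpa using h₁, by simpa using h₂⟩
  | succ r ih =>
    obtain ⟨d₁, d₂, hprod, hd₁, hd₂⟩ := ih (fun i ↦ p i.castSucc) (fun i ↦ hp _)
      fun j ↦ by simpa [Fin.prod_Iio_castSucc] using h j.castSucc
    have hlast : (d₁ : K) * d₂ * (p (Fin.last r) : K) ^ 2 ≤ D₁ * D₂ := by
      simpa [Fin.Iio_last_eq_map, ← hprod] using h (Fin.last r)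
    have hd₁_pos : (0 : K) < d₁ := by
      have := hprod ▸ prod_pos fun (i : Fin r) _ ↦ hp i.castSucc
      exact_mod_cast Nat.pos_of_mul_pos_right this
    rw [Fin.prod_univ_castSucc, ← hprod]
    rcases mul_le_or_mul_le_of_mul_mul_sq_le hd₁_pos (by exact_mod_cast hp _)
      (zero_le_one.trans h₂) hlast with hq | hq
    · exact ⟨d₁ * p (Fin.last r), d₂, by ring, by push_cast; exact hq, hd₂⟩
    · exact ⟨d₁, d₂ * p (Fin.last r), by ring, hd₁, by push_cast; exact hq⟩

end Greedy

lemma pow_mul_pow_le_rpow {x a b c u v : ℝ} (hx : 1 ≤ x) (hu : 0 ≤ u) (hv : 0 ≤ v)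
    (hua : u ≤ x ^ a) (hvb : v ≤ x ^ b) {m k : ℕ} (h : m * a + k * b ≤ c) :
    u ^ m * v ^ k ≤ x ^ c :=
  have hx₀ : 0 < x := zero_lt_one.trans_le hx
  calc u ^ m * v ^ k ≤ (x ^ a) ^ m * (x ^ b) ^ k := by gcongr
    _ = x ^ (m * a + k * b) := by
      rw [← rpow_mul_natCast hx₀.le, ← rpow_mul_natCast hx₀.le, ← rpow_add hx₀]; ring_nf
    _ ≤ x ^ c := rpow_le_rpow_of_exponent_le hx h

theorem two_factor_greedy_general (δ x ϑ N D : ℝ) (hδ : 0 < δ) (hδ' : δ < 1 / 100000)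
    (hx : 1 < x) (hϑ1 : 1 / 2 ≤ ϑ) (hϑ2 : ϑ ≤ 5 / 8)
    (hN1 : x ^ (2 * δ) ≤ N) (hN2 : N ≤ x ^ ((1 : ℝ) / 3 + δ))
    (hD2 : D ≤ x ^ (ϑ - 2 * δ))
    (hN3 : x ^ ((5 * ϑ - 2) / 3 - δ) ≤ N)
    (r : ℕ) (p : Fin r → ℕ) (hp : ∀ i, (p i).Prime)
    (hwell : ∀ j : Fin r,
      ((∏ i ∈ Finset.univ.filter (· < j), p i : ℕ) : ℝ) * (p j : ℝ) ^ 2 ≤ D) :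
    ∃ d₁ d₂ d₃ : ℕ, 0 < d₁ ∧ 0 < d₂ ∧ 0 < d₃ ∧ d₁ * d₂ * d₃ = ∏ i, p i ∧
      (d₁ : ℝ) ≤ N * x ^ (-δ) ∧
      N ^ 2 * (d₂ : ℝ) * (d₃ : ℝ) ^ 2 ≤ x ^ (1 - δ) ∧
      N ^ 2 * (d₂ : ℝ) ^ 5 * (d₃ : ℝ) ^ 2 ≤ x ^ (2 - δ) := by
  have hx₀ : 0 < x := zero_lt_one.trans hx
  set n := logb x N
  have hN : x ^ n = N := rpow_logb hx₀ hx.ne' ((rpow_pos_of_pos hx₀ _).trans_le hN1)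
  rw [← hN, rpow_le_rpow_left_iff hx] at hN1 hN2 hN3
  obtain ⟨d₁, d₂, hprod, hd₁, hd₂⟩ :=
    exists_mul_eq_prod_le_le_of_prod_Iio_mul_sq_le p (fun i ↦ (hp i).pos)
      (D₁ := x ^ (n - δ)) (D₂ := x ^ (ϑ - δ - n))
      (one_le_rpow hx.le (by linarith)) (one_le_rpow hx.le (by linarith)) fun j ↦ by
        rw [← rpow_add hx₀, show n - δ + (ϑ - δ - n) = ϑ - 2 * δ by ring, ← filter_gt_eq_Iio]
        exact (hwell j).trans hD2
  have hN_nonneg : 0 ≤ N := hN ▸ rpow_nonneg hx₀.le n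
  have hprod_pos : 0 < d₁ * d₂ := hprod ▸ prod_pos fun i _ ↦ (hp i).pos
  refine ⟨d₁, d₂, 1, Nat.pos_of_mul_pos_right hprod_pos, Nat.pos_of_mul_pos_left hprod_pos,
    one_pos, by rw [mul_one, hprod], ?_, ?_, ?_⟩
  · rwa [← hN, ← rpow_add hx₀, ← sub_eq_add_neg]
  · simpa using pow_mul_pow_le_rpow (m := 2) (k := 1) (c := 1 - δ) hx.le hN_nonneg
      (Nat.cast_nonneg d₂) hN.ge hd₂ (by push_cast; linarith)
  · simpa using pow_mul_pow_le_rpow (m := 2) (k := 5) (c := 2 - δ) hx.le hN_nonneg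
      (Nat.cast_nonneg d₂) hN.ge hd₂ (by push_cast; linarith)

/-- Two-factor greedy algorithm: with `0 < δ < 10⁻⁵`, `ϑ ∈ [1/2, 5/8]`,
`x^{2δ} ≤ N ≤ x^{1/3+δ}`, `1 ≤ D ≤ x^{ϑ−2δ}`, `x^{(5ϑ−2)/3−δ} ≤ N`, any
`d = p₁⋯p_r` with primes `p₁ ≥ ⋯ ≥ p_r` and `p₁⋯p_{j−1}p_j² ≤ D` for all `j ≤ r`
admits a factorization `d = d₁d₂d₃` with `d₁ ≤ N x^{−δ}`, `N²d₂d₃² ≤ x^{1−δ}`,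
`N²d₂⁵d₃² ≤ x^{2−δ}`. -/
theorem two_factor_greedy (δ x ϑ N D : ℝ) (hδ : 0 < δ) (hδ' : δ < 1 / 100000)
    (hx : 1 < x) (hϑ1 : 1 / 2 ≤ ϑ) (hϑ2 : ϑ ≤ 5 / 8)
    (hN1 : x ^ (2 * δ) ≤ N) (hN2 : N ≤ x ^ ((1 : ℝ) / 3 + δ))
    (hD1 : 1 ≤ D) (hD2 : D ≤ x ^ (ϑ - 2 * δ))
    (hN3 : x ^ ((5 * ϑ - 2) / 3 - δ) ≤ N)
    (r : ℕ) (p : Fin r → ℕ) (hp : ∀ i, (p i).Prime)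
    (hmono : ∀ i j : Fin r, i ≤ j → p j ≤ p i)
    (hwell : ∀ j : Fin r,
      ((∏ i ∈ Finset.univ.filter (· < j), p i : ℕ) : ℝ) * (p j : ℝ) ^ 2 ≤ D) :
    ∃ d₁ d₂ d₃ : ℕ, 0 < d₁ ∧ 0 < d₂ ∧ 0 < d₃ ∧ d₁ * d₂ * d₃ = ∏ i, p i ∧
      (d₁ : ℝ) ≤ N * x ^ (-δ) ∧
      N ^ 2 * (d₂ : ℝ) * (d₃ : ℝ) ^ 2 ≤ x ^ (1 - δ) ∧
      N ^ 2 * (d₂ : ℝ) ^ 5 * (d₃ : ℝ) ^ 2 ≤ x ^ (2 - δ) :=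
  two_factor_greedy_general δ x ϑ N D hδ hδ' hx hϑ1 hϑ2 hN1 hN2 hD2 hN3 r p hp hwell
end

section
/- Let 0 < δ < 10⁻⁵, x > 1, ϑ ∈ [1/2, 5/8], x^{2δ} ≤ N ≤ x^{1/3+δ}, 1 ≤ D ≤ x^{ϑ−2δ}, and set v := 2ϑ − 1 and u := (2 − 2ϑ)/3. Suppose d = p₁⋯p_r (primes p₁ ≥ ⋯ ≥ p_r, with p₁⋯p_{j−1}p_j² ≤ D for all j ≤ r) admits a factorization d = d₁d₂d₃ into positive integers with d₁ ≤ N x^{−δ}, x^v ≤ d₂ ≤ x^u, and d₃ ≤ max(1, x^{ϑ−δ}/(d₂·N)). Then d admits a (possibly different) factorization d = d₁'d₂'d₃' into positive integers with d₁' ≤ N x^{−δ}, N² d₂' d₃'² ≤ x^{1−δ}, and N² (d₂')⁵ (d₃')² ≤ x^{2−δ}. -/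
open scoped BigOperators

lemma greedy_lemma (r : ℕ) (p : Fin r → ℕ) (D Z : ℝ) (hZ : 1 ≤ Z)
    (hwell : ∀ j : Fin r,
      ((∏ i ∈ Finset.univ.filter (· < j), p i : ℕ) : ℝ) * (p j : ℝ) ^ 2 ≤ D) :
    ∃ S : Finset (Fin r), ((∏ i ∈ S, p i : ℕ) : ℝ) ≤ Z ∧
      ((∏ i ∈ Sᶜ, p i) = 1 ∨ ((∏ i ∈ Sᶜ, p i : ℕ) : ℝ) * Z ≤ D) := by
  have main : ∀ n : ℕ, ∃ S : Finset (Fin r), (∀ i ∈ S, (i : ℕ) < n) ∧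
      ((∏ i ∈ S, p i : ℕ) : ℝ) ≤ Z ∧
      ∀ j : Fin r, (j : ℕ) < n → j ∉ S →
        Z < ((∏ i ∈ S.filter (· < j), p i : ℕ) : ℝ) * p j := by
    intro n
    induction n with
    | zero => exact ⟨∅, by simp, by simpa using hZ, fun j hj => by omega⟩
    | succ n ih =>
      obtain ⟨S, hSlt, hSZ, hSkip⟩ := ih
      by_cases hn : n < r
      · have hfilt : S.filter (· < (⟨n, hn⟩ : Fin r)) = S := by
          apply Finset.filter_true_of_mem
          intro i hi
          exact Fin.lt_def.mpr (hSlt i hi)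
        by_cases hacc : ((∏ i ∈ S, p i : ℕ) : ℝ) * p ⟨n, hn⟩ ≤ Z
        · have hj₀S : (⟨n, hn⟩ : Fin r) ∉ S := fun h => absurd (hSlt _ h) (lt_irrefl n)
          refine ⟨insert ⟨n, hn⟩ S, ?_, ?_, ?_⟩
          · intro i hi
            rcases Finset.mem_insert.mp hi with h | h
            · simp [h]
            · exact Nat.lt_succ_of_lt (hSlt i h)
          · rw [Finset.prod_insert hj₀S]
            push_cast
            push_cast at hacc
            nlinarith [hacc]
          · intro j hj hjS
            have hjn : (j : ℕ) ≠ n := by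
              intro h
              apply hjS
              rw [show j = (⟨n, hn⟩ : Fin r) from Fin.ext h]
              exact Finset.mem_insert_self _ _
            have hj' : (j : ℕ) < n := by omega
            have hjS' : j ∉ S := fun h => hjS (Finset.mem_insert_of_mem h)
            have hfj : (insert (⟨n, hn⟩ : Fin r) S).filter (· < j) = S.filter (· < j) := by
              rw [Finset.filter_insert, if_neg]
              intro h
              have h2 : n < (j : ℕ) := Fin.lt_def.mp h
              omega
            rw [hfj]; exact hSkip j hj' hjS'
        · refine ⟨S, fun i hi => Nat.lt_succ_of_lt (hSlt i hi), hSZ, ?_⟩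
          intro j hj hjS
          by_cases hjn : (j : ℕ) < n
          · exact hSkip j hjn hjS
          · have hje : j = ⟨n, hn⟩ := Fin.ext (show (j : ℕ) = n by omega)
            subst hje
            rw [hfilt]
            exact lt_of_not_ge hacc
      · refine ⟨S, fun i hi => Nat.lt_succ_of_lt (hSlt i hi), hSZ, ?_⟩
        intro j hj hjS
        exact hSkip j (by omega) hjS
  obtain ⟨S, _, hSZ, hSkip⟩ := main r
  refine ⟨S, hSZ, ?_⟩
  by_cases hc : Sᶜ = ∅
  · left; rw [hc]; simp
  · right
    have hne : Sᶜ.Nonempty := Finset.nonempty_iff_ne_empty.mpr hc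
    set J := Sᶜ.max' hne with hJ
    have hJc : J ∈ Sᶜ := Finset.max'_mem _ _
    have hJS : J ∉ S := Finset.mem_compl.mp hJc
    have hskip := hSkip J J.isLt hJS
    have hch := hwell J
    have hdis : Disjoint (S.filter (· < J)) (Sᶜ.erase J) :=
      Finset.disjoint_left.mpr (fun a ha hb =>
        (Finset.mem_compl.mp (Finset.mem_of_mem_erase hb)) (Finset.mem_of_mem_filter a ha))
    have hdecomp : Finset.univ.filter (· < J) = (S.filter (· < J)) ∪ Sᶜ.erase J := by
      ext i
      simp only [Finset.mem_filter, Finset.mem_univ, true_and, Finset.mem_union,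
        Finset.mem_erase, Finset.mem_compl]
      constructor
      · intro hi
        by_cases hiS : i ∈ S
        · exact Or.inl ⟨hiS, hi⟩
        · exact Or.inr ⟨ne_of_lt hi, hiS⟩
      · rintro (⟨hiS, hi⟩ | ⟨hne', hiS⟩)
        · exact hi
        · exact lt_of_le_of_ne (Finset.le_max' _ _ (Finset.mem_compl.mpr hiS)) hne'
    have hprodU : (∏ i ∈ Finset.univ.filter (· < J), p i) =
        (∏ i ∈ S.filter (· < J), p i) * ∏ i ∈ Sᶜ.erase J, p i := by
      rw [hdecomp, Finset.prod_union hdis]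
    have hbsplit : (∏ i ∈ Sᶜ, p i) = (∏ i ∈ Sᶜ.erase J, p i) * p J :=
      (Finset.prod_erase_mul _ _ hJc).symm
    have hE0 : (0:ℝ) ≤ ((∏ i ∈ Sᶜ.erase J, p i : ℕ) : ℝ) := Nat.cast_nonneg _
    have hpJ0 : (0:ℝ) ≤ (p J : ℝ) := Nat.cast_nonneg _
    calc ((∏ i ∈ Sᶜ, p i : ℕ) : ℝ) * Z
        = (((∏ i ∈ Sᶜ.erase J, p i : ℕ) : ℝ) * (p J : ℝ)) * Z := by
          rw [hbsplit]; push_cast; ring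
      _ ≤ (((∏ i ∈ Sᶜ.erase J, p i : ℕ) : ℝ) * (p J : ℝ)) *
          (((∏ i ∈ S.filter (· < J), p i : ℕ) : ℝ) * (p J : ℝ)) := by
          apply mul_le_mul_of_nonneg_left hskip.le (by positivity)
      _ = ((∏ i ∈ Finset.univ.filter (· < J), p i : ℕ) : ℝ) * (p J : ℝ) ^ 2 := by
          rw [hprodU]; push_cast; ring
      _ ≤ D := hch

/-- General factorization criterion: with `0 < δ < 10⁻⁵`, `ϑ ∈ [1/2, 5/8]`,
`x^{2δ} ≤ N ≤ x^{1/3+δ}`, `1 ≤ D ≤ x^{ϑ−2δ}`, `v := 2ϑ−1`, `u := (2−2ϑ)/3`: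
if `d = p₁⋯p_r` (primes `p₁ ≥ ⋯ ≥ p_r`, `p₁⋯p_{j−1}p_j² ≤ D` for all `j ≤ r`) has
a factorization `d = d₁d₂d₃` with `d₁ ≤ N x^{−δ}`, `x^v ≤ d₂ ≤ x^u`, and
`d₃ ≤ max(1, x^{ϑ−δ}/(d₂N))`, then `d` has a (possibly different) factorization
`d = d₁'d₂'d₃'` with `d₁' ≤ N x^{−δ}`, `N²d₂'d₃'² ≤ x^{1−δ}`, `N²(d₂')⁵(d₃')² ≤ x^{2−δ}`. -/
theorem general_factorization_criterion (δ x ϑ N D : ℝ) (hδ : 0 < δ)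
    (hδ' : δ < 1 / 100000) (hx : 1 < x) (hϑ1 : 1 / 2 ≤ ϑ) (hϑ2 : ϑ ≤ 5 / 8)
    (hN1 : x ^ (2 * δ) ≤ N) (hN2 : N ≤ x ^ ((1 : ℝ) / 3 + δ))
    (hD1 : 1 ≤ D) (hD2 : D ≤ x ^ (ϑ - 2 * δ))
    (r : ℕ) (p : Fin r → ℕ) (hp : ∀ i, (p i).Prime)
    (hmono : ∀ i j : Fin r, i ≤ j → p j ≤ p i)
    (hwell : ∀ j : Fin r,
      ((∏ i ∈ Finset.univ.filter (· < j), p i : ℕ) : ℝ) * (p j : ℝ) ^ 2 ≤ D)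
    (d₁ d₂ d₃ : ℕ) (hd₁ : 0 < d₁) (hd₂ : 0 < d₂) (hd₃ : 0 < d₃)
    (hfac : d₁ * d₂ * d₃ = ∏ i, p i)
    (hb₁ : (d₁ : ℝ) ≤ N * x ^ (-δ))
    (hb₂l : x ^ (2 * ϑ - 1) ≤ (d₂ : ℝ)) (hb₂u : (d₂ : ℝ) ≤ x ^ ((2 - 2 * ϑ) / 3))
    (hb₃ : (d₃ : ℝ) ≤ max 1 (x ^ (ϑ - δ) / ((d₂ : ℝ) * N))) :
    ∃ d₁' d₂' d₃' : ℕ, 0 < d₁' ∧ 0 < d₂' ∧ 0 < d₃' ∧ d₁' * d₂' * d₃' = ∏ i, p i ∧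
      (d₁' : ℝ) ≤ N * x ^ (-δ) ∧
      N ^ 2 * (d₂' : ℝ) * (d₃' : ℝ) ^ 2 ≤ x ^ (1 - δ) ∧
      N ^ 2 * (d₂' : ℝ) ^ 5 * (d₃' : ℝ) ^ 2 ≤ x ^ (2 - δ) := by
  have hx0 : (0:ℝ) < x := lt_trans one_pos hx
  have hx1 : (1:ℝ) ≤ x := hx.le
  have hN0 : (0:ℝ) < N := lt_of_lt_of_le (Real.rpow_pos_of_pos hx0 _) hN1
  have hd₂0 : (0:ℝ) < (d₂:ℝ) := by exact_mod_cast hd₂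
  have hd₃0 : (0:ℝ) < (d₃:ℝ) := by exact_mod_cast hd₃
  have hrpow_add : ∀ a b : ℝ, x ^ (a+b) = x ^ a * x ^ b := fun a b => Real.rpow_add hx0 a b
  have hmono' : ∀ a b : ℝ, a ≤ b → x ^ a ≤ x ^ b := fun a b h =>
    Real.rpow_le_rpow_of_exponent_le hx1 h
  have hsq : ∀ a : ℝ, (x ^ a) ^ 2 = x ^ (2*a) := by
    intro a
    rw [← Real.rpow_natCast (x ^ a) 2, ← Real.rpow_mul hx0.le]
    norm_num
    ring_nf
  have hcube : ∀ a : ℝ, (x ^ a) ^ 3 = x ^ (3*a) := by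
    intro a
    rw [← Real.rpow_natCast (x ^ a) 3, ← Real.rpow_mul hx0.le]
    norm_num
    ring_nf
  by_cases hcase : (1:ℝ) ≤ x ^ (ϑ - δ) / ((d₂:ℝ) * N)
  · -- Case 1: d₃ ≤ x^(ϑ-δ)/(d₂ N); use the given factorization
    have hb₃' : (d₃:ℝ) ≤ x ^ (ϑ - δ) / ((d₂:ℝ) * N) := by
      rwa [max_eq_right hcase] at hb₃
    have hQ : N * (d₂:ℝ) * (d₃:ℝ) ≤ x ^ (ϑ - δ) := by
      have h := (le_div_iff₀ (by positivity : (0:ℝ) < (d₂:ℝ) * N)).mp hb₃'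
      nlinarith [h]
    refine ⟨d₁, d₂, d₃, hd₁, hd₂, hd₃, hfac, hb₁, ?_, ?_⟩
    · have h3 : (N * (d₂:ℝ) * (d₃:ℝ))^2 ≤ (x ^ (ϑ-δ))^2 :=
        pow_le_pow_left₀ (by positivity) hQ 2
      rw [hsq] at h3
      have h1 : N ^ 2 * (d₂:ℝ) * (d₃:ℝ) ^ 2 * x ^ (2*ϑ-1) ≤ x ^ (2*(ϑ-δ)) := by
        have h2 : N ^ 2 * (d₂:ℝ) * (d₃:ℝ)^2 * x ^ (2*ϑ-1)
            ≤ N^2*(d₂:ℝ)*(d₃:ℝ)^2*(d₂:ℝ) :=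
          mul_le_mul_of_nonneg_left hb₂l (by positivity)
        nlinarith [h2, h3]
      have h4 : x ^ (2*(ϑ-δ)) = x ^ (1-2*δ) * x ^ (2*ϑ-1) := by
        rw [← hrpow_add]; ring_nf
      rw [h4] at h1
      have h5 : N^2*(d₂:ℝ)*(d₃:ℝ)^2 ≤ x ^ (1-2*δ) :=
        le_of_mul_le_mul_right h1 (Real.rpow_pos_of_pos hx0 _)
      exact h5.trans (hmono' _ _ (by linarith))
    · have h3 : (N * (d₂:ℝ) * (d₃:ℝ))^2 ≤ (x ^ (ϑ-δ))^2 :=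
        pow_le_pow_left₀ (by positivity) hQ 2
      have h6 : (d₂:ℝ)^3 ≤ (x ^ ((2-2*ϑ)/3))^3 := pow_le_pow_left₀ hd₂0.le hb₂u 3
      have h7 : (x ^ (ϑ-δ))^2 * (x ^ ((2-2*ϑ)/3))^3 = x ^ (2-2*δ) := by
        rw [hsq, hcube, ← hrpow_add]
        ring_nf
      calc N ^ 2 * (d₂:ℝ) ^ 5 * (d₃:ℝ) ^ 2
          = (N * (d₂:ℝ) * (d₃:ℝ))^2 * (d₂:ℝ)^3 := by ring
        _ ≤ (x ^ (ϑ-δ))^2 * (x ^ ((2-2*ϑ)/3))^3 :=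
            mul_le_mul h3 h6 (by positivity) (by positivity)
        _ = x ^ (2-2*δ) := h7
        _ ≤ x ^ (2-δ) := hmono' _ _ (by linarith)
  · -- Case 2: d₃ = 1 and x^(ϑ-δ) < d₂ N; regreedy
    have hb₃1 : (d₃:ℝ) ≤ 1 := by
      rwa [max_eq_left (le_of_lt (lt_of_not_ge hcase))] at hb₃
    have hlow : x ^ (ϑ - δ) < (d₂:ℝ) * N := by
      have h := lt_of_not_ge hcase
      rwa [div_lt_one (by positivity)] at h
    have hϑ5 : ϑ - δ < (2-2*ϑ)/3 + ((1:ℝ)/3 + δ) := by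
      have h1 : (d₂:ℝ) * N ≤ x ^ ((2-2*ϑ)/3) * x ^ ((1:ℝ)/3 + δ) :=
        mul_le_mul hb₂u hN2 hN0.le (by positivity)
      have h2 : x ^ (ϑ-δ) < x ^ ((2-2*ϑ)/3 + ((1:ℝ)/3+δ)) := by
        rw [hrpow_add]; exact lt_of_lt_of_le hlow h1
      exact (Real.rpow_lt_rpow_left_iff hx).mp h2
    have hNlow : x ^ (ϑ - δ - (2-2*ϑ)/3) ≤ N := by
      have h1 : x ^ (ϑ-δ) ≤ x ^ ((2-2*ϑ)/3) * N :=
        le_of_lt (lt_of_lt_of_le hlow (mul_le_mul_of_nonneg_right hb₂u hN0.le))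
      have h3 : x ^ (ϑ-δ-(2-2*ϑ)/3) * x ^ ((2-2*ϑ)/3) = x ^ (ϑ-δ) := by
        rw [← hrpow_add]; ring_nf
      rw [← h3, mul_comm (x ^ ((2-2*ϑ)/3)) N] at h1
      exact le_of_mul_le_mul_right h1 (Real.rpow_pos_of_pos hx0 _)
    have hZ1 : (1:ℝ) ≤ N * x ^ (-δ) := by
      have h1 : x ^ (2*δ) * x ^ (-δ) ≤ N * x ^ (-δ) :=
        mul_le_mul_of_nonneg_right hN1 (Real.rpow_pos_of_pos hx0 _).le
      have h2 : x ^ (2*δ) * x ^ (-δ) = x ^ δ := by rw [← hrpow_add]; ring_nf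
      have h3 : (1:ℝ) ≤ x ^ δ := by
        have := hmono' 0 δ hδ.le
        rwa [Real.rpow_zero] at this
      linarith
    obtain ⟨S, hSZ, hSb⟩ := greedy_lemma r p D (N * x ^ (-δ)) hZ1 hwell
    have hAB : (∏ i ∈ S, p i) * (∏ i ∈ Sᶜ, p i) = ∏ i, p i :=
      Finset.prod_mul_prod_compl S p
    have hApos : 0 < ∏ i ∈ S, p i := Finset.prod_pos (fun i _ => (hp i).pos)
    have hBpos : 0 < ∏ i ∈ Sᶜ, p i := Finset.prod_pos (fun i _ => (hp i).pos)
    have hNsq : N^2 ≤ x ^ ((2:ℝ)/3 + 2*δ) := by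
      have h1 := pow_le_pow_left₀ hN0.le hN2 2
      have h2 : (x ^ ((1:ℝ)/3+δ))^2 = x ^ ((2:ℝ)/3+2*δ) := by rw [hsq]; ring_nf
      rw [h2] at h1; exact h1
    rcases hSb with hB1 | hBD
    · refine ⟨∏ i ∈ S, p i, 1, 1, hApos, one_pos, one_pos, ?_, hSZ, ?_, ?_⟩
      · rw [mul_one, mul_one, ← hAB, hB1, mul_one]
      · push_cast
        calc N^2 * 1 * 1^2 = N^2 := by ring
          _ ≤ x ^ ((2:ℝ)/3+2*δ) := hNsq
          _ ≤ x ^ (1-δ) := hmono' _ _ (by linarith)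
      · push_cast
        calc N^2 * 1^5 * 1^2 = N^2 := by ring
          _ ≤ x ^ ((2:ℝ)/3+2*δ) := hNsq
          _ ≤ x ^ (2-δ) := hmono' _ _ (by linarith)
    · -- B * (N x^{-δ}) ≤ D
      set B := ∏ i ∈ Sᶜ, p i with hBdef
      have hNB : N * (B:ℝ) ≤ x ^ (ϑ - δ) := by
        have h1 : (B:ℝ) * (N * x ^ (-δ)) * x ^ δ ≤ D * x ^ δ :=
          mul_le_mul_of_nonneg_right hBD (Real.rpow_pos_of_pos hx0 _).le
        have h2 : x ^ (-δ) * x ^ δ = 1 := by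
          rw [← hrpow_add]; norm_num
        have h3 : D * x ^ δ ≤ x ^ (ϑ-2*δ) * x ^ δ :=
          mul_le_mul_of_nonneg_right hD2 (Real.rpow_pos_of_pos hx0 _).le
        have h4 : x ^ (ϑ-2*δ) * x ^ δ = x ^ (ϑ-δ) := by rw [← hrpow_add]; ring_nf
        have h5 : (B:ℝ) * (N * x ^ (-δ)) * x ^ δ = N * (B:ℝ) * (x ^ (-δ) * x ^ δ) := by ring
        rw [h5, h2, mul_one] at h1
        linarith
      have hBu : (B:ℝ) ≤ x ^ ((2-2*ϑ)/3) := by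
        have h1 : x ^ (ϑ-δ-(2-2*ϑ)/3) * (B:ℝ) ≤ N * B :=
          mul_le_mul_of_nonneg_right hNlow (Nat.cast_nonneg _)
        have h2 : x ^ (ϑ-δ-(2-2*ϑ)/3) * (B:ℝ) ≤ x ^ (ϑ-δ) := le_trans h1 hNB
        have h3 : x ^ (ϑ-δ) = x ^ (ϑ-δ-(2-2*ϑ)/3) * x ^ ((2-2*ϑ)/3) := by
          rw [← hrpow_add]; ring_nf
        rw [h3] at h2
        exact le_of_mul_le_mul_left h2 (Real.rpow_pos_of_pos hx0 _)
      refine ⟨∏ i ∈ S, p i, B, 1, hApos, hBpos, one_pos, by rw [mul_one, hAB], hSZ, ?_, ?_⟩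
      · have h2 : N * (N*(B:ℝ)) ≤ x ^ ((1:ℝ)/3+δ) * x ^ (ϑ-δ) :=
          mul_le_mul hN2 hNB (by positivity) (by positivity)
        have h3 : x ^ ((1:ℝ)/3+δ) * x ^ (ϑ-δ) = x ^ ((1:ℝ)/3+ϑ) := by
          rw [← hrpow_add]; ring_nf
        calc N^2 * (B:ℝ) * (1:ℕ)^2 = N * (N*(B:ℝ)) := by push_cast; ring
          _ ≤ x ^ ((1:ℝ)/3+ϑ) := by rw [← h3]; exact h2
          _ ≤ x ^ (1-δ) := hmono' _ _ (by linarith)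
      · have h1 : (N*(B:ℝ))^2 ≤ (x ^ (ϑ-δ))^2 := pow_le_pow_left₀ (by positivity) hNB 2
        have h2 : ((B:ℝ))^3 ≤ (x ^ ((2-2*ϑ)/3))^3 := pow_le_pow_left₀ (Nat.cast_nonneg _) hBu 3
        have h3 : (x ^ (ϑ-δ))^2 * (x ^ ((2-2*ϑ)/3))^3 = x ^ (2-2*δ) := by
          rw [hsq, hcube, ← hrpow_add]; ring_nf
        calc N^2 * (B:ℝ)^5 * (1:ℕ)^2 = (N*(B:ℝ))^2 * (B:ℝ)^3 := by push_cast; ring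
          _ ≤ (x ^ (ϑ-δ))^2 * (x ^ ((2-2*ϑ)/3))^3 :=
              mul_le_mul h1 h2 (by positivity) (by positivity)
          _ = x ^ (2-2*δ) := h3
          _ ≤ x ^ (2-δ) := hmono' _ _ (by linarith)
end

section
/- Let N, H, S₀, S be positive integers with S₀ ≤ S, let a be a nonzero integer, and let 𝒩 be a positive real. Then for any ε > 0, Σ_{n ∼ 𝒩} Σ_{s₀ ∼ S₀} Σ_{s₁, s₂ ∼ S/s₀, gcd(s₁,s₂)=1} (#{(h₁,h₂) : h₁ ≍ H, h₂ ≍ H, h₁s₁ − h₂s₂ = ±n/a})² = O_ε((𝒩·S·S₀·H)^{ε}·𝒩·(H·S + H²·S₀)). -/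
open scoped BigOperators

/-- The number of pairs `(h₁, h₂)` with `hᵢ ≍ H` (i.e. `c₁H ≤ hᵢ ≤ c₂H`) and
`a(h₁s₁ − h₂s₂) = sgn·n`. -/
noncomputable def pairCount (a sgn : ℤ) (c₁ c₂ : ℝ) (H : ℕ) (s₁ s₂ n : ℕ) : ℕ :=
  Set.ncard {p : ℕ × ℕ |
    c₁ * H ≤ (p.1 : ℝ) ∧ (p.1 : ℝ) ≤ c₂ * H ∧
    c₁ * H ≤ (p.2 : ℝ) ∧ (p.2 : ℝ) ≤ c₂ * H ∧
    a * ((p.1 : ℤ) * s₁ - (p.2 : ℤ) * s₂) = sgn * n}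

open Classical in
lemma divisor_bound (ε : ℝ) (hε : 0 < ε) :
    ∃ C : ℝ, 1 ≤ C ∧ ∀ m : ℕ, m ≠ 0 → (m.divisors.card : ℝ) ≤ C * (m : ℝ) ^ ε := by
  have hlog2 : 0 < Real.log 2 := Real.log_pos one_lt_two
  set C₀ : ℝ := 1 + 1 / (ε * Real.log 2) with hC₀
  have hC₀1 : 1 ≤ C₀ := le_add_of_nonneg_right (by positivity)
  set B : ℕ := ⌈(2:ℝ) ^ (1/ε)⌉₊ with hB
  refine ⟨C₀ ^ (B+1), le_trans hC₀1 (le_self_pow₀ hC₀1 (Nat.succ_ne_zero B)), ?_⟩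
  intro m hm
  have key : ∀ p ∈ m.primeFactors, ((m.factorization p + 1 : ℕ) : ℝ) ≤
      (if (p:ℝ) ^ ε < 2 then C₀ else 1) * (((p ^ m.factorization p : ℕ) : ℝ)) ^ ε := by
    intro p hp
    have hpp : p.Prime := Nat.prime_of_mem_primeFactors hp
    have hp2 : (2:ℝ) ≤ (p:ℝ) := by exact_mod_cast hpp.two_le
    set k : ℕ := m.factorization p with hk
    have hcast : (((p ^ k : ℕ) : ℝ)) ^ ε = ((p:ℝ) ^ (k:ℝ)) ^ ε := by
      push_cast
      rw [Real.rpow_natCast]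
    rw [hcast]
    have hxpos : (0:ℝ) < (p:ℝ) := by linarith
    by_cases h : (p:ℝ) ^ ε < 2
    · rw [if_pos h]
      have e0 : ((p:ℝ) ^ (k:ℝ)) ^ ε = (p:ℝ) ^ ((k:ℝ) * ε) := by
        rw [← Real.rpow_mul (le_of_lt hxpos)]
      have e1 : (2:ℝ) ^ ((k:ℝ)*ε) ≤ (p:ℝ) ^ ((k:ℝ)*ε) :=
        Real.rpow_le_rpow (by norm_num) hp2 (by positivity)
      have e2 : 1 + (k:ℝ)*ε*Real.log 2 ≤ (2:ℝ) ^ ((k:ℝ)*ε) := by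
        rw [Real.rpow_def_of_pos (by norm_num)]
        have := Real.add_one_le_exp ((k:ℝ)*ε*Real.log 2)
        have heq : Real.log 2 * ((k:ℝ)*ε) = (k:ℝ)*ε*Real.log 2 := by ring
        rw [heq]
        linarith
      have e3 : ((k:ℝ) + 1) ≤ C₀ * (1 + (k:ℝ)*ε*Real.log 2) := by
        have h1 : 0 < ε * Real.log 2 := by positivity
        have hinv : (ε * Real.log 2) * (1/(ε*Real.log 2)) = 1 :=
          mul_one_div_cancel h1.ne'
        have expand : C₀ * (1 + (k:ℝ)*ε*Real.log 2)
            = 1 + (k:ℝ)*ε*Real.log 2 + 1/(ε*Real.log 2)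
              + (k:ℝ) * ((ε*Real.log 2) * (1/(ε*Real.log 2))) := by
          rw [hC₀]; ring
        rw [hinv, mul_one] at expand
        rw [expand]
        have : 0 ≤ (k:ℝ)*ε*Real.log 2 := by positivity
        have : 0 ≤ 1/(ε*Real.log 2) := by positivity
        push_cast
        linarith
      have e4 : 0 ≤ (2:ℝ)^((k:ℝ)*ε) - (1 + (k:ℝ)*ε*Real.log 2) := by linarith
      push_cast
      rw [e0]
      calc (k:ℝ) + 1 ≤ C₀ * (1 + (k:ℝ)*ε*Real.log 2) := e3
        _ ≤ C₀ * (2:ℝ)^((k:ℝ)*ε) := by nlinarith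
        _ ≤ C₀ * (p:ℝ)^((k:ℝ)*ε) := by nlinarith
    · rw [if_neg h]
      push_neg at h
      have t1 : ((k:ℕ) + 1 : ℝ) ≤ (2:ℝ) ^ k := by
        exact_mod_cast Nat.lt_two_pow_self (n := k)
      have t2 : (2:ℝ) ^ k ≤ ((p:ℝ) ^ ε) ^ k := by
        apply pow_le_pow_left₀ (by norm_num) h
      have t3 : ((p:ℝ) ^ ε) ^ k = ((p:ℝ) ^ (k:ℝ)) ^ ε := by
        rw [← Real.rpow_natCast ((p:ℝ)^ε) k, ← Real.rpow_mul (le_of_lt hxpos),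
          mul_comm ε (k:ℝ), Real.rpow_mul (le_of_lt hxpos)]
      push_cast
      rw [one_mul, ← t3]
      calc (k:ℝ) + 1 ≤ (2:ℝ)^k := by exact_mod_cast t1
        _ ≤ ((p:ℝ)^ε)^k := t2
  -- assemble
  have hcard : (m.divisors.card : ℝ) = ∏ p ∈ m.primeFactors, ((m.factorization p + 1 : ℕ) : ℝ) := by
    rw [Nat.card_divisors hm]
    push_cast
    rfl
  rw [hcard]
  have step1 : ∏ p ∈ m.primeFactors, ((m.factorization p + 1 : ℕ) : ℝ)
      ≤ ∏ p ∈ m.primeFactors,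
        ((if (p:ℝ) ^ ε < 2 then C₀ else 1) * (((p ^ m.factorization p : ℕ) : ℝ)) ^ ε) := by
    apply Finset.prod_le_prod
    · intro p _; positivity
    · exact key
  refine le_trans step1 ?_
  rw [Finset.prod_mul_distrib]
  have hprod2 : ∏ p ∈ m.primeFactors, (((p ^ m.factorization p : ℕ) : ℝ)) ^ ε = (m:ℝ) ^ ε := by
    rw [Real.finset_prod_rpow _ _ (fun i _ => by positivity)]
    congr 1
    have := Nat.factorization_prod_pow_eq_self hm
    rw [Finsupp.prod, Nat.support_factorization] at this
    exact_mod_cast this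
  rw [hprod2]
  have hprod1 : ∏ p ∈ m.primeFactors, (if (p:ℝ) ^ ε < 2 then C₀ else 1) ≤ C₀ ^ (B+1) := by
    rw [Finset.prod_ite, Finset.prod_const, Finset.prod_const, one_pow, mul_one]
    apply pow_le_pow_right₀ hC₀1
    have hsub : (m.primeFactors.filter (fun p : ℕ => (p:ℝ) ^ ε < 2)) ⊆ Finset.range (B+1) := by
      intro p hp
      simp only [Finset.mem_filter] at hp
      obtain ⟨hp1, hp2⟩ := hp
      have hpp : p.Prime := Nat.prime_of_mem_primeFactors hp1
      have hppos : (0:ℝ) < (p:ℝ) := by exact_mod_cast hpp.pos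
      have : (p:ℝ) < (2:ℝ) ^ (1/ε) := by
        have h1 : ((p:ℝ) ^ ε) ^ (1/ε) < (2:ℝ) ^ (1/ε) :=
          Real.rpow_lt_rpow (by positivity) hp2 (by positivity)
        have h2 : ((p:ℝ) ^ ε) ^ (1/ε) = (p:ℝ) := by
          rw [← Real.rpow_mul (le_of_lt hppos)]
          rw [mul_one_div, div_self hε.ne', Real.rpow_one]
        rwa [h2] at h1
      have : (p:ℝ) ≤ (B:ℝ) := le_trans (le_of_lt this) (Nat.le_ceil _)
      have : p ≤ B := by exact_mod_cast this
      exact Finset.mem_range.mpr (Nat.lt_succ_of_le this)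
    calc (m.primeFactors.filter (fun p : ℕ => (p:ℝ) ^ ε < 2)).card
        ≤ (Finset.range (B+1)).card := Finset.card_le_card hsub
      _ = B + 1 := Finset.card_range _
  have hm0 : (0:ℝ) ≤ (m:ℝ) ^ ε := by positivity
  exact mul_le_mul_of_nonneg_right hprod1 hm0

open Classical in
noncomputable def solFin (a sgn : ℤ) (c₁ c₂ : ℝ) (H s₁ s₂ n : ℕ) : Finset (ℕ × ℕ) :=
  ((Finset.range (⌊c₂ * H⌋₊ + 1)) ×ˢ (Finset.range (⌊c₂ * H⌋₊ + 1))).filter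
    (fun p => c₁ * H ≤ (p.1 : ℝ) ∧ (p.1 : ℝ) ≤ c₂ * H ∧
      c₁ * H ≤ (p.2 : ℝ) ∧ (p.2 : ℝ) ≤ c₂ * H ∧
      a * ((p.1 : ℤ) * s₁ - (p.2 : ℤ) * s₂) = sgn * n)

lemma mem_solFin {a sgn : ℤ} {c₁ c₂ : ℝ} {H s₁ s₂ n : ℕ} {p : ℕ × ℕ} :
    p ∈ solFin a sgn c₁ c₂ H s₁ s₂ n ↔
      (c₁ * H ≤ (p.1 : ℝ) ∧ (p.1 : ℝ) ≤ c₂ * H ∧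
        c₁ * H ≤ (p.2 : ℝ) ∧ (p.2 : ℝ) ≤ c₂ * H ∧
        a * ((p.1 : ℤ) * s₁ - (p.2 : ℤ) * s₂) = sgn * n) := by
  unfold solFin
  simp only [Finset.mem_filter, Finset.mem_product, Finset.mem_range]
  constructor
  · rintro ⟨-, h⟩; exact h
  · rintro ⟨h1, h2, h3, h4, h5⟩
    exact ⟨⟨Nat.lt_succ_of_le (Nat.le_floor h2), Nat.lt_succ_of_le (Nat.le_floor h4)⟩,
      h1, h2, h3, h4, h5⟩

lemma pairCount_eq (a sgn : ℤ) (c₁ c₂ : ℝ) (H s₁ s₂ n : ℕ) :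
    pairCount a sgn c₁ c₂ H s₁ s₂ n = (solFin a sgn c₁ c₂ H s₁ s₂ n).card := by
  rw [← Set.ncard_coe_finset]
  unfold pairCount
  congr 1
  ext p
  rw [Set.mem_setOf_eq, Finset.mem_coe, mem_solFin]

lemma solFin_card_le {a sgn : ℤ} (ha : a ≠ 0) {c₁ c₂ : ℝ} (hc : c₁ ≤ c₂)
    {H s₁ s₂ n : ℕ} (hgcd : Nat.gcd s₁ s₂ = 1) (hs₂ : 0 < s₂) :
    ((solFin a sgn c₁ c₂ H s₁ s₂ n).card : ℝ) ≤ 2 * ((c₂ - c₁) * H / s₂) + 1 := by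
  have hs₂R : (0:ℝ) < (s₂:ℝ) := by exact_mod_cast hs₂
  have hs₂Z : (s₂:ℤ) ≠ 0 := by exact_mod_cast hs₂.ne'
  have hKH : (0:ℝ) ≤ (c₂ - c₁) * H := mul_nonneg (by linarith) (Nat.cast_nonneg H)
  rcases Finset.eq_empty_or_nonempty (solFin a sgn c₁ c₂ H s₁ s₂ n) with he | ⟨p₀, hp₀⟩
  · rw [he]
    simp only [Finset.card_empty, Nat.cast_zero]
    positivity
  obtain ⟨hp₀1, hp₀2, hp₀3, hp₀4, hp₀e⟩ := mem_solFin.mp hp₀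
  have hdvd : ∀ p ∈ solFin a sgn c₁ c₂ H s₁ s₂ n, (s₂:ℤ) ∣ ((p.1:ℤ) - (p₀.1:ℤ)) := by
    intro p hp
    obtain ⟨h1, h2, h3, h4, he'⟩ := mem_solFin.mp hp
    have h2' : (p.1:ℤ) * s₁ - (p.2:ℤ) * s₂ = (p₀.1:ℤ) * s₁ - (p₀.2:ℤ) * s₂ :=
      mul_left_cancel₀ ha (by rw [he', hp₀e])
    have h3' : (s₁:ℤ) * ((p.1:ℤ) - p₀.1) = (s₂:ℤ) * ((p.2:ℤ) - p₀.2) := by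
      linear_combination h2'
    have h4' : (s₂:ℤ) ∣ (s₁:ℤ) * ((p.1:ℤ) - p₀.1) := ⟨(p.2:ℤ) - p₀.2, h3'⟩
    have hcop : IsCoprime (s₂:ℤ) (s₁:ℤ) := by
      rw [Int.isCoprime_iff_gcd_eq_one, Int.gcd_natCast_natCast, Nat.gcd_comm]
      exact hgcd
    exact hcop.dvd_of_dvd_mul_left h4'
  set b : ℤ := ⌊(c₂ - c₁) * H / s₂⌋ with hb
  have hb0 : 0 ≤ b := Int.le_floor.mpr (by simpa using div_nonneg hKH hs₂R.le)
  have hdiv : ∀ p ∈ solFin a sgn c₁ c₂ H s₁ s₂ n,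
      (((p.1:ℤ) - (p₀.1:ℤ)) / (s₂:ℤ)) * (s₂:ℤ) = (p.1:ℤ) - (p₀.1:ℤ) := by
    intro p hp
    exact Int.ediv_mul_cancel (hdvd p hp)
  have hcard : (solFin a sgn c₁ c₂ H s₁ s₂ n).card ≤ (Finset.Icc (-b) b).card := by
    apply Finset.card_le_card_of_injOn (fun p => ((p.1:ℤ) - (p₀.1:ℤ)) / (s₂:ℤ))
    · intro p hp
      obtain ⟨h1, h2, h3, h4, he'⟩ := mem_solFin.mp hp
      simp only [Finset.mem_coe]
      rw [Finset.mem_Icc, ← abs_le, hb, Int.le_floor]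
      have hcast : ((((p.1:ℤ) - (p₀.1:ℤ)) / (s₂:ℤ) : ℤ) : ℝ)
          = (((p.1:ℝ)) - ((p₀.1:ℝ))) / (s₂:ℝ) := by
        have h5 := congrArg (fun z : ℤ => (z:ℝ)) (hdiv p hp)
        push_cast at h5
        field_simp at h5 ⊢
        linarith
      rw [Int.cast_abs, hcast, abs_div, abs_of_pos hs₂R]
      gcongr
      rw [abs_le]
      constructor <;> linarith
    · intro p hp q hq heq
      simp only at heq
      have h1 : (p.1:ℤ) - (p₀.1:ℤ) = (q.1:ℤ) - (p₀.1:ℤ) := by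
        rw [← hdiv p hp, ← hdiv q hq, heq]
      have hp1 : p.1 = q.1 := by
        have : (p.1:ℤ) = (q.1:ℤ) := by linarith
        exact_mod_cast this
      obtain ⟨_, _, _, _, hep⟩ := mem_solFin.mp hp
      obtain ⟨_, _, _, _, heq'⟩ := mem_solFin.mp hq
      have h2' : (p.1:ℤ) * s₁ - (p.2:ℤ) * s₂ = (q.1:ℤ) * s₁ - (q.2:ℤ) * s₂ :=
        mul_left_cancel₀ ha (by rw [hep, heq'])
      have h3' : (p.2:ℤ) * (s₂:ℤ) = (q.2:ℤ) * (s₂:ℤ) := by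
        have : (p.1:ℤ) = (q.1:ℤ) := by exact_mod_cast hp1
        linear_combination (s₁:ℤ) * this - h2'
      have hp2 : p.2 = q.2 := by
        have := mul_right_cancel₀ hs₂Z h3'
        exact_mod_cast this
      exact Prod.ext hp1 hp2
  calc ((solFin a sgn c₁ c₂ H s₁ s₂ n).card : ℝ)
      ≤ ((Finset.Icc (-b) b).card : ℝ) := by exact_mod_cast hcard
    _ = ((2*b+1 : ℤ) : ℝ) := by
        rw [Int.card_Icc, show b + 1 - (-b) = 2*b+1 by ring]
        have h7 : ((2*b+1).toNat : ℤ) = 2*b+1 := Int.toNat_of_nonneg (by linarith)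
        exact_mod_cast congrArg (fun z : ℤ => (z:ℝ)) h7
    _ ≤ 2 * ((c₂ - c₁) * H / s₂) + 1 := by
        push_cast
        have := Int.floor_le ((c₂ - c₁) * H / s₂)
        rw [← hb] at this
        linarith

open Classical in
lemma sumB {a sgn : ℤ} (ha : a ≠ 0) (hsgn : sgn = 1 ∨ sgn = -1)
    {c₁ c₂ : ℝ} (hc₁ : 0 < c₁) (hc : c₁ ≤ c₂)
    (H S s₁ : ℕ) (hH : 0 < H) (𝒩 : ℝ) (h𝒩 : 0 ≤ 𝒩)
    (T : ℝ) (hT0 : 0 ≤ T)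
    (hT : ∀ m : ℕ, m ≠ 0 → (m:ℝ) ≤ 2*c₂*H*S → ((m.divisors.card : ℕ) : ℝ) ≤ T) :
    ∑ n ∈ Finset.Icc 1 ⌊2*𝒩⌋₊, ∑ s₂ ∈ Finset.Icc 1 (2*S),
      (if 𝒩 < (n:ℝ) then ((solFin a sgn c₁ c₂ H s₁ s₂ n).card : ℝ) else 0)
      ≤ ((c₂ - c₁)*H + 1) * (𝒩 + 1) * T := by
  have hc₂0 : 0 < c₂ := lt_of_lt_of_le hc₁ hc
  have hsgn0 : sgn ≠ 0 := by rcases hsgn with h|h <;> simp [h]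
  have hsgnsq : sgn * sgn = 1 := by rcases hsgn with h|h <;> simp [h]
  have hc₁H : (0:ℝ) < c₁ * H := mul_pos hc₁ (by exact_mod_cast hH)
  set A : Finset (ℕ×ℕ) := (Finset.Icc 1 ⌊2*𝒩⌋₊) ×ˢ (Finset.Icc 1 (2*S)) with hA
  set G : ℕ×ℕ → Finset (ℕ×ℕ) :=
    fun x => if 𝒩 < (x.1:ℝ) then solFin a sgn c₁ c₂ H s₁ x.2 x.1 else ∅ with hG
  set Q := A.sigma G with hQ
  have hstep : ∑ n ∈ Finset.Icc 1 ⌊2*𝒩⌋₊, ∑ s₂ ∈ Finset.Icc 1 (2*S),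
      (if 𝒩 < (n:ℝ) then ((solFin a sgn c₁ c₂ H s₁ s₂ n).card : ℝ) else 0)
      = ((Q.card : ℕ) : ℝ) := by
    rw [hQ, Finset.card_sigma, Nat.cast_sum, hA, Finset.sum_product]
    apply Finset.sum_congr rfl
    intro n _
    apply Finset.sum_congr rfl
    intro s₂ _
    by_cases h : 𝒩 < (n:ℝ)
    · rw [if_pos h, hG]
      simp only [h, if_true]
    · rw [if_neg h, hG]
      simp only [h, if_false]
      simp
  -- membership facts
  have hmemQ : ∀ z ∈ Q, z.1.1 ∈ Finset.Icc 1 ⌊2*𝒩⌋₊ ∧ z.1.2 ∈ Finset.Icc 1 (2*S) ∧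
      𝒩 < (z.1.1:ℝ) ∧ z.2 ∈ solFin a sgn c₁ c₂ H s₁ z.1.2 z.1.1 := by
    intro z hz
    rw [hQ, Finset.mem_sigma] at hz
    obtain ⟨hz1, hz2⟩ := hz
    rw [hA, Finset.mem_product] at hz1
    by_cases h : 𝒩 < (z.1.1:ℝ)
    · refine ⟨hz1.1, hz1.2, h, ?_⟩
      rw [hG] at hz2
      simpa [h] using hz2
    · rw [hG] at hz2
      simp only [h, if_false] at hz2
      exact absurd hz2 (Finset.notMem_empty _)
  set g : (Σ _ : ℕ×ℕ, ℕ×ℕ) → ℕ×ℕ := fun z => (z.2.1, z.2.2 * z.1.2) with hg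
  -- each z in Q has positive h₂
  have hh₂pos : ∀ z ∈ Q, 0 < z.2.2 := by
    intro z hz
    obtain ⟨-, -, -, hsol⟩ := hmemQ z hz
    obtain ⟨-, -, f3, -, -⟩ := mem_solFin.mp hsol
    have : (0:ℝ) < (z.2.2:ℝ) := lt_of_lt_of_le hc₁H f3
    exact_mod_cast this
  -- fiber bound
  have hfiber : ∀ y ∈ Q.image g, ((Q.filter (fun z => g z = y)).card : ℝ) ≤ T := by
    intro y hy
    obtain ⟨z₀, hz₀, hgz₀⟩ := Finset.mem_image.mp hy
    obtain ⟨hz₀A1, hz₀A2, hz₀n, hz₀sol⟩ := hmemQ z₀ hz₀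
    obtain ⟨e1, e2, e3, e4, e5⟩ := mem_solFin.mp hz₀sol
    have hm : y.2 = z₀.2.2 * z₀.1.2 := by rw [← hgz₀]
    have hs₂0pos : 0 < z₀.1.2 := (Finset.mem_Icc.mp hz₀A2).1
    have hm0 : y.2 ≠ 0 := by
      rw [hm]
      exact Nat.mul_ne_zero (hh₂pos z₀ hz₀).ne' hs₂0pos.ne'
    have hmle : (y.2:ℝ) ≤ 2*c₂*H*S := by
      rw [hm]
      push_cast
      have s₂le : (z₀.1.2:ℝ) ≤ 2*(S:ℝ) := by
        exact_mod_cast (Finset.mem_Icc.mp hz₀A2).2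
      calc (z₀.2.2:ℝ) * (z₀.1.2:ℝ) ≤ (c₂*H) * (2*S) :=
            mul_le_mul e4 s₂le (Nat.cast_nonneg _) (mul_nonneg hc₂0.le (Nat.cast_nonneg H))
        _ = 2*c₂*H*S := by ring
    have hfc : (Q.filter (fun z => g z = y)).card ≤ (y.2).divisors.card := by
      apply Finset.card_le_card_of_injOn (fun z => z.2.2)
      · intro z hz
        obtain ⟨hzQ, hzg⟩ := Finset.mem_filter.mp hz
        simp only [Finset.mem_coe]
        rw [Nat.mem_divisors]
        refine ⟨⟨z.1.2, ?_⟩, hm0⟩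
        rw [← hzg]
      · intro z hz w hw hzw
        simp only [Finset.coe_filter, Set.mem_setOf_eq] at hz hw
        obtain ⟨hzQ, hzg⟩ := hz
        obtain ⟨hwQ, hwg⟩ := hw
        simp only at hzw
        have hz21 : z.2.1 = y.1 := by rw [← hzg]
        have hw21 : w.2.1 = y.1 := by rw [← hwg]
        have hzm : z.2.2 * z.1.2 = y.2 := by rw [← hzg]
        have hwm : w.2.2 * w.1.2 = y.2 := by rw [← hwg]
        have hzpos := hh₂pos z hzQ
        have hside : z.1.2 = w.1.2 := by
          have : z.2.2 * z.1.2 = z.2.2 * w.1.2 := by rw [hzm, hzw, hwm]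
          exact Nat.eq_of_mul_eq_mul_left hzpos this
        obtain ⟨-, -, -, hzsol⟩ := hmemQ z hzQ
        obtain ⟨-, -, -, hwsol⟩ := hmemQ w hwQ
        obtain ⟨-, -, -, -, fz⟩ := mem_solFin.mp hzsol
        obtain ⟨-, -, -, -, fw⟩ := mem_solFin.mp hwsol
        have hn : z.1.1 = w.1.1 := by
          have hl : sgn * (z.1.1:ℤ) = sgn * (w.1.1:ℤ) := by
            rw [← fz, ← fw, hz21, hw21, hzw, hside]
          have := mul_left_cancel₀ hsgn0 hl
          exact_mod_cast this
        have h1 : z.1 = w.1 := Prod.ext hn hside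
        have h2 : z.2 = w.2 := Prod.ext (by rw [hz21, hw21]) hzw
        exact Sigma.ext h1 (heq_of_eq h2)
    calc ((Q.filter (fun z => g z = y)).card : ℝ) ≤ ((y.2).divisors.card : ℝ) := by
          exact_mod_cast hfc
      _ ≤ T := hT y.2 hm0 hmle
  -- image bound
  have hkey : ∀ y ∈ Q.image g, (y.1 ∈ Finset.Icc ⌈c₁*(H:ℝ)⌉₊ ⌊c₂*(H:ℝ)⌋₊) ∧
      ∃ n : ℕ, n ∈ Finset.Icc (⌊𝒩⌋₊+1) ⌊2*𝒩⌋₊ ∧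
        sgn * (a * ((y.1:ℤ) * s₁ - (y.2:ℤ))) = (n:ℤ) := by
    intro y hy
    obtain ⟨z, hzQ, hzg⟩ := Finset.mem_image.mp hy
    obtain ⟨hA1, hA2, hn, hsol⟩ := hmemQ z hzQ
    obtain ⟨f1, f2, f3, f4, f5⟩ := mem_solFin.mp hsol
    have hy1 : y.1 = z.2.1 := by rw [← hzg]
    have hy2 : y.2 = z.2.2 * z.1.2 := by rw [← hzg]
    constructor
    · rw [hy1, Finset.mem_Icc]
      exact ⟨Nat.ceil_le.mpr f1, Nat.le_floor f2⟩
    · refine ⟨z.1.1, ?_, ?_⟩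
      · rw [Finset.mem_Icc]
        refine ⟨Nat.succ_le_of_lt ((Nat.floor_lt h𝒩).mpr hn), (Finset.mem_Icc.mp hA1).2⟩
      · rw [hy1, hy2]
        push_cast
        calc sgn * (a * ((z.2.1:ℤ) * s₁ - (z.2.2:ℤ) * (z.1.2:ℤ)))
            = sgn * (sgn * (z.1.1:ℤ)) := by rw [f5]
          _ = (z.1.1:ℤ) := by rw [← mul_assoc, hsgnsq, one_mul]
  have himage : ((Q.image g).card : ℝ) ≤ ((c₂-c₁)*H + 1) * (𝒩 + 1) := by
    have hcard2 : (Q.image g).card ≤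
        ((Finset.Icc ⌈c₁*(H:ℝ)⌉₊ ⌊c₂*(H:ℝ)⌋₊) ×ˢ (Finset.Icc (⌊𝒩⌋₊+1) ⌊2*𝒩⌋₊)).card := by
      apply Finset.card_le_card_of_injOn
        (fun y => (y.1, (sgn * (a * ((y.1:ℤ) * s₁ - (y.2:ℤ)))).toNat))
      · intro y hy
        obtain ⟨hy1, n, hnmem, hneq⟩ := hkey y hy
        simp only [Finset.mem_coe]
        rw [Finset.mem_product]
        refine ⟨hy1, ?_⟩
        simp only [hneq, Int.toNat_natCast]
        exact hnmem
      · intro y hy y' hy' heq2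
        simp only [Prod.mk.injEq] at heq2
        obtain ⟨hfst, hsnd⟩ := heq2
        obtain ⟨-, n, -, hneq⟩ := hkey y (Finset.mem_coe.mp hy)
        obtain ⟨-, n', -, hneq'⟩ := hkey y' (Finset.mem_coe.mp hy')
        have hn : n = n' := by
          have h1 : (sgn * (a * ((y.1:ℤ) * s₁ - (y.2:ℤ)))).toNat = n := by
            rw [hneq]; exact Int.toNat_natCast n
          have h2 : (sgn * (a * ((y'.1:ℤ) * s₁ - (y'.2:ℤ)))).toNat = n' := by
            rw [hneq']; exact Int.toNat_natCast n'
          rw [← h1, ← h2, hsnd]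
        have hval : sgn * (a * ((y.1:ℤ) * s₁ - (y.2:ℤ)))
            = sgn * (a * ((y'.1:ℤ) * s₁ - (y'.2:ℤ))) := by
          rw [hneq, hneq', hn]
        have hval2 := mul_left_cancel₀ ha (mul_left_cancel₀ hsgn0 hval)
        rw [hfst] at hval2
        have hcast : (y.2:ℤ) = (y'.2:ℤ) := by linarith
        have hy2 : y.2 = y'.2 := by exact_mod_cast hcast
        exact Prod.ext hfst hy2
    have hF1 : ((Finset.Icc ⌈c₁*(H:ℝ)⌉₊ ⌊c₂*(H:ℝ)⌋₊).card : ℝ) ≤ (c₂-c₁)*H + 1 := by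
      rw [Nat.card_Icc]
      have hKH : (0:ℝ) ≤ (c₂ - c₁)*H := mul_nonneg (by linarith) (Nat.cast_nonneg H)
      rcases le_or_gt ⌈c₁*(H:ℝ)⌉₊ (⌊c₂*(H:ℝ)⌋₊ + 1) with h | h
      · rw [Nat.cast_sub h]
        have h1 : (⌊c₂*(H:ℝ)⌋₊ : ℝ) ≤ c₂*H := Nat.floor_le (by positivity)
        have h2 : c₁*(H:ℝ) ≤ (⌈c₁*(H:ℝ)⌉₊ : ℝ) := Nat.le_ceil _
        push_cast
        linarith
      · rw [Nat.sub_eq_zero_of_le h.le]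
        simpa using by linarith
    have hF2 : ((Finset.Icc (⌊𝒩⌋₊+1) ⌊2*𝒩⌋₊).card : ℝ) ≤ 𝒩 + 1 := by
      rw [Nat.card_Icc]
      have hfl : ⌊2*𝒩⌋₊ ≤ 2*⌊𝒩⌋₊ + 1 := by
        have h1 : 𝒩 < (⌊𝒩⌋₊:ℝ) + 1 := Nat.lt_floor_add_one 𝒩
        have h2 : (2*𝒩 : ℝ) < ((2*⌊𝒩⌋₊ + 2 : ℕ) : ℝ) := by push_cast; linarith
        have := (Nat.floor_lt (by linarith)).mpr h2
        omega
      have hnat : ⌊2*𝒩⌋₊ + 1 - (⌊𝒩⌋₊ + 1) ≤ ⌊𝒩⌋₊ + 1 := by omega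
      calc ((⌊2*𝒩⌋₊ + 1 - (⌊𝒩⌋₊ + 1) : ℕ) : ℝ) ≤ ((⌊𝒩⌋₊ + 1 : ℕ) : ℝ) := by
            exact_mod_cast hnat
        _ ≤ 𝒩 + 1 := by
            push_cast
            linarith [Nat.floor_le h𝒩]
    calc ((Q.image g).card : ℝ)
        ≤ (((Finset.Icc ⌈c₁*(H:ℝ)⌉₊ ⌊c₂*(H:ℝ)⌋₊) ×ˢ
            (Finset.Icc (⌊𝒩⌋₊+1) ⌊2*𝒩⌋₊)).card : ℝ) := by exact_mod_cast hcard2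
      _ = ((Finset.Icc ⌈c₁*(H:ℝ)⌉₊ ⌊c₂*(H:ℝ)⌋₊).card : ℝ) *
          ((Finset.Icc (⌊𝒩⌋₊+1) ⌊2*𝒩⌋₊).card : ℝ) := by
            rw [Finset.card_product]; push_cast; ring
      _ ≤ ((c₂-c₁)*H + 1) * (𝒩 + 1) := by
            apply mul_le_mul hF1 hF2 (Nat.cast_nonneg _)
            have hKH : (0:ℝ) ≤ (c₂ - c₁)*H := mul_nonneg (by linarith) (Nat.cast_nonneg H)
            linarith
  rw [hstep]
  have hQcard : ((Q.card : ℕ) : ℝ)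
      = ∑ y ∈ Q.image g, ((Q.filter (fun z => g z = y)).card : ℝ) := by
    rw [Finset.card_eq_sum_card_image g Q]
    push_cast
    rfl
  rw [hQcard]
  calc ∑ y ∈ Q.image g, ((Q.filter (fun z => g z = y)).card : ℝ)
      ≤ ∑ _y ∈ Q.image g, T := Finset.sum_le_sum hfiber
    _ = ((Q.image g).card : ℝ) * T := by rw [Finset.sum_const, nsmul_eq_mul]
    _ ≤ (((c₂-c₁)*H + 1) * (𝒩 + 1)) * T := mul_le_mul_of_nonneg_right himage hT0

set_option maxHeartbeats 2000000 in
open Classical in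
/-- The ℓ²-type count: for any `ε > 0` and fixed `0 < c₁ < c₂` there is a constant `C`
such that for all positive integers `N, H, S₀, S` with `S₀ ≤ S`, nonzero `a`, sign `±1`,
and real `𝒩 > 0`,
`Σ_{n ∼ 𝒩} Σ_{s₀ ∼ S₀} Σ_{s₁,s₂ ∼ S/s₀, (s₁,s₂)=1} (#{(h₁,h₂) : hᵢ ≍ H, a(h₁s₁−h₂s₂) = ±n})²
  ≤ C·(2 + 𝒩SS₀H)^ε · 𝒩 · (HS + H²S₀)`. -/
theorem l2_count_bound (ε c₁ c₂ : ℝ) (hε : 0 < ε) (hc₁ : 0 < c₁) (hc : c₁ < c₂) :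
    ∃ C : ℝ, 0 < C ∧ ∀ (N H S₀ S : ℕ), 0 < N → 0 < H → 0 < S₀ → 0 < S → S₀ ≤ S →
      ∀ a : ℤ, a ≠ 0 → ∀ sgn : ℤ, (sgn = 1 ∨ sgn = -1) → ∀ 𝒩 : ℝ, 0 < 𝒩 →
      (∑ n ∈ Finset.Icc 1 ⌊2 * 𝒩⌋₊, ∑ s₀ ∈ Finset.Icc 1 (2 * S₀),
        ∑ s₁ ∈ Finset.Icc 1 (2 * S), ∑ s₂ ∈ Finset.Icc 1 (2 * S),
          if 𝒩 < (n : ℝ) ∧ (S₀ : ℝ) < (s₀ : ℝ) ∧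
              (S : ℝ) / s₀ < (s₁ : ℝ) ∧ (s₁ : ℝ) ≤ 2 * (S : ℝ) / s₀ ∧
              (S : ℝ) / s₀ < (s₂ : ℝ) ∧ (s₂ : ℝ) ≤ 2 * (S : ℝ) / s₀ ∧
              Nat.gcd s₁ s₂ = 1
          then ((pairCount a sgn c₁ c₂ H s₁ s₂ n : ℝ)) ^ 2 else 0)
        ≤ C * (2 + 𝒩 * S * S₀ * H) ^ ε * 𝒩 * ((H : ℝ) * S + (H : ℝ) ^ 2 * S₀) := by
  obtain ⟨Cd, hCd1, hCd⟩ := divisor_bound ε hε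
  have hc₂0 : 0 < c₂ := lt_trans hc₁ hc
  have hCd0 : 0 < Cd := lt_of_lt_of_le one_pos hCd1
  have hP0 : (0:ℝ) < (4*c₂) ^ ε := Real.rpow_pos_of_pos (by linarith) ε
  have hCpos : 0 < 3*(8*(c₂-c₁)^2+10*(c₂-c₁)+2)*Cd*(4*c₂)^ε := by
    have h1 : (0:ℝ) < 8*(c₂-c₁)^2+10*(c₂-c₁)+2 := by nlinarith
    positivity
  refine ⟨3*(8*(c₂-c₁)^2+10*(c₂-c₁)+2)*Cd*(4*c₂)^ε, hCpos, ?_⟩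
  intro N H S₀ S hN hH hS₀ hS hSS a ha sgn hsgn 𝒩 h𝒩
  have hHR : (0:ℝ) < H := by exact_mod_cast hH
  have hSR : (0:ℝ) < S := by exact_mod_cast hS
  have hS₀R : (0:ℝ) < S₀ := by exact_mod_cast hS₀
  have hS₀R1 : (1:ℝ) ≤ S₀ := by exact_mod_cast hS₀
  have hHR1 : (1:ℝ) ≤ H := by exact_mod_cast hH
  set X : ℝ := 𝒩 * S * S₀ * H with hX
  have hX0 : 0 < X := by positivity
  have hR0 : (0:ℝ) < (2+X) ^ ε := Real.rpow_pos_of_pos (by linarith) ε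
  have hRHS0 : (0:ℝ) ≤ 3*(8*(c₂-c₁)^2+10*(c₂-c₁)+2)*Cd*(4*c₂)^ε * (2+X)^ε * 𝒩 *
      ((H:ℝ)*S + (H:ℝ)^2*S₀) := by
    apply mul_nonneg
    apply mul_nonneg
    apply mul_nonneg hCpos.le hR0.le
    exact h𝒩.le
    positivity
  simp only [pairCount_eq]
  by_cases hsmall : ⌊2*𝒩⌋₊ = 0
  · rw [hsmall, show Finset.Icc 1 0 = (∅ : Finset ℕ) from Finset.Icc_eq_empty (by omega)]
    simpa using hRHS0
  -- main case
  have h2𝒩 : (1:ℝ) ≤ 2*𝒩 := by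
    have h1 : 1 ≤ ⌊2*𝒩⌋₊ := Nat.one_le_iff_ne_zero.mpr hsmall
    calc (1:ℝ) ≤ (⌊2*𝒩⌋₊ : ℝ) := by exact_mod_cast h1
      _ ≤ 2*𝒩 := Nat.floor_le (by linarith)
  -- the divisor-count bound T
  set T : ℝ := Cd * ((4*c₂)^ε * (2+X)^ε) with hT'
  have hT0 : (0:ℝ) < T := by positivity
  have hTfact : ∀ m : ℕ, m ≠ 0 → (m:ℝ) ≤ 2*c₂*H*S → ((m.divisors.card : ℕ) : ℝ) ≤ T := by
    intro m hm hmle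
    have hbase : (m:ℝ) ≤ 4*c₂*(2+X) := by
      have hHS2X : (H:ℝ)*S ≤ 2*X := by
        have hst : (1:ℝ) ≤ 2*𝒩*S₀ := by nlinarith
        have h2 : (H:ℝ)*S ≤ ((H:ℝ)*S)*(2*𝒩*S₀) := le_mul_of_one_le_right (by positivity) hst
        calc (H:ℝ)*S ≤ ((H:ℝ)*S)*(2*𝒩*S₀) := h2
          _ = 2*X := by rw [hX]; ring
      nlinarith
    calc ((m.divisors.card : ℕ) : ℝ) ≤ Cd * (m:ℝ)^ε := hCd m hm
      _ ≤ Cd * (4*c₂*(2+X))^ε := by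
          apply mul_le_mul_of_nonneg_left _ hCd0.le
          exact Real.rpow_le_rpow (Nat.cast_nonneg m) hbase hε.le
      _ = T := by
          rw [hT', Real.mul_rpow (by linarith) (by linarith)]
  set Φ : ℝ := 4*(c₂-c₁)*H*S₀/S + 1 with hΦ'
  have hΦ0 : (0:ℝ) ≤ Φ := by
    rw [hΦ']
    have : (0:ℝ) ≤ 4*(c₂-c₁)*H*S₀/S := by
      apply div_nonneg _ hSR.le
      have : (0:ℝ) ≤ c₂ - c₁ := by linarith
      positivity
    linarith
  have hW0 : (0:ℝ) ≤ ((c₂-c₁)*(H:ℝ)+1)*(𝒩+1)*T := by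
    have : (0:ℝ) ≤ (c₂-c₁)*(H:ℝ) := mul_nonneg (by linarith) hHR.le
    have h2 : (0:ℝ) ≤ 𝒩 + 1 := by linarith
    positivity
  -- swap sums
  rw [Finset.sum_comm]
  refine le_trans (le_of_eq (Finset.sum_congr rfl fun s₀ _ => Finset.sum_comm)) ?_
  -- per (s₀, s₁) bound
  have key : ∀ s₀ ∈ Finset.Icc 1 (2*S₀), ∀ s₁ ∈ Finset.Icc 1 (2*S),
      (∑ n ∈ Finset.Icc 1 ⌊2*𝒩⌋₊, ∑ s₂ ∈ Finset.Icc 1 (2*S),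
        if 𝒩 < (n : ℝ) ∧ (S₀ : ℝ) < (s₀ : ℝ) ∧
            (S : ℝ) / s₀ < (s₁ : ℝ) ∧ (s₁ : ℝ) ≤ 2 * (S : ℝ) / s₀ ∧
            (S : ℝ) / s₀ < (s₂ : ℝ) ∧ (s₂ : ℝ) ≤ 2 * (S : ℝ) / s₀ ∧
            Nat.gcd s₁ s₂ = 1
        then (((solFin a sgn c₁ c₂ H s₁ s₂ n).card : ℝ)) ^ 2 else 0)
      ≤ (if (S₀:ℝ) < (s₀:ℝ) ∧ (s₁:ℝ) ≤ 2*(S:ℝ)/s₀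
          then Φ * (((c₂-c₁)*(H:ℝ)+1)*(𝒩+1)*T) else 0) := by
    intro s₀ hs₀ s₁ hs₁
    by_cases hcase : (S₀:ℝ) < (s₀:ℝ) ∧ (s₁:ℝ) ≤ 2*(S:ℝ)/s₀
    · rw [if_pos hcase]
      have hs₀pos : (0:ℝ) < (s₀:ℝ) := lt_of_le_of_lt (Nat.cast_nonneg S₀) hcase.1
      have hs₀le : (s₀:ℝ) ≤ 2*(S₀:ℝ) := by exact_mod_cast (Finset.mem_Icc.mp hs₀).2
      have hstep : ∀ n ∈ Finset.Icc 1 ⌊2*𝒩⌋₊, ∀ s₂ ∈ Finset.Icc 1 (2*S),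
          (if 𝒩 < (n : ℝ) ∧ (S₀ : ℝ) < (s₀ : ℝ) ∧
              (S : ℝ) / s₀ < (s₁ : ℝ) ∧ (s₁ : ℝ) ≤ 2 * (S : ℝ) / s₀ ∧
              (S : ℝ) / s₀ < (s₂ : ℝ) ∧ (s₂ : ℝ) ≤ 2 * (S : ℝ) / s₀ ∧
              Nat.gcd s₁ s₂ = 1
            then (((solFin a sgn c₁ c₂ H s₁ s₂ n).card : ℝ)) ^ 2 else 0)
          ≤ Φ * (if 𝒩 < (n:ℝ) then ((solFin a sgn c₁ c₂ H s₁ s₂ n).card : ℝ) else 0) := by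
        intro n hn s₂ hs₂
        by_cases hcond : 𝒩 < (n : ℝ) ∧ (S₀ : ℝ) < (s₀ : ℝ) ∧
            (S : ℝ) / s₀ < (s₁ : ℝ) ∧ (s₁ : ℝ) ≤ 2 * (S : ℝ) / s₀ ∧
            (S : ℝ) / s₀ < (s₂ : ℝ) ∧ (s₂ : ℝ) ≤ 2 * (S : ℝ) / s₀ ∧ Nat.gcd s₁ s₂ = 1
        · rw [if_pos hcond, if_pos hcond.1]
          obtain ⟨hn𝒩, hs₀lt, hs₁lt, hs₁le, hs₂lt, hs₂le, hgcd⟩ := hcond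
          have hs₂pos : 0 < s₂ := (Finset.mem_Icc.mp hs₂).1
          have hs₂R : (0:ℝ) < (s₂:ℝ) := by exact_mod_cast hs₂pos
          have hpc := solFin_card_le (a := a) (sgn := sgn) (H := H) (n := n) ha hc.le hgcd hs₂pos
          have hS2 : (S:ℝ) ≤ 2*(S₀:ℝ)*(s₂:ℝ) := by
            have h1 : (S:ℝ) < s₂ * s₀ := (div_lt_iff₀ hs₀pos).mp hs₂lt
            calc (S:ℝ) ≤ (s₂:ℝ) * s₀ := h1.le
              _ ≤ (s₂:ℝ) * (2*S₀) := mul_le_mul_of_nonneg_left hs₀le hs₂R.le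
              _ = 2*(S₀:ℝ)*s₂ := by ring
          have hb1 : 2 * ((c₂ - c₁) * (H:ℝ) / s₂) + 1 ≤ Φ := by
            rw [hΦ']
            have hKH : (0:ℝ) ≤ (c₂ - c₁) * (H:ℝ) := mul_nonneg (by linarith) hHR.le
            have h2 : 2 * ((c₂ - c₁) * (H:ℝ) / s₂) ≤ 4*(c₂-c₁)*(H:ℝ)*(S₀:ℝ)/(S:ℝ) := by
              rw [show 2 * ((c₂ - c₁) * (H:ℝ) / s₂) = (2*((c₂-c₁)*(H:ℝ)))/(s₂:ℝ) by ring,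
                div_le_div_iff₀ hs₂R hSR]
              nlinarith [mul_le_mul_of_nonneg_left hS2 hKH]
            linarith
          have hcn : (0:ℝ) ≤ ((solFin a sgn c₁ c₂ H s₁ s₂ n).card : ℝ) := Nat.cast_nonneg _
          calc (((solFin a sgn c₁ c₂ H s₁ s₂ n).card : ℝ)) ^ 2
              = ((solFin a sgn c₁ c₂ H s₁ s₂ n).card : ℝ) *
                ((solFin a sgn c₁ c₂ H s₁ s₂ n).card : ℝ) := sq _
            _ ≤ Φ * ((solFin a sgn c₁ c₂ H s₁ s₂ n).card : ℝ) :=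
                mul_le_mul_of_nonneg_right (le_trans hpc hb1) hcn
        · rw [if_neg hcond]
          by_cases hn' : 𝒩 < (n:ℝ)
          · rw [if_pos hn']
            exact mul_nonneg hΦ0 (Nat.cast_nonneg _)
          · rw [if_neg hn', mul_zero]
      calc (∑ n ∈ Finset.Icc 1 ⌊2*𝒩⌋₊, ∑ s₂ ∈ Finset.Icc 1 (2*S), _)
          ≤ ∑ n ∈ Finset.Icc 1 ⌊2*𝒩⌋₊, ∑ s₂ ∈ Finset.Icc 1 (2*S),
            Φ * (if 𝒩 < (n:ℝ) then ((solFin a sgn c₁ c₂ H s₁ s₂ n).card : ℝ) else 0) :=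
            Finset.sum_le_sum fun n hn => Finset.sum_le_sum fun s₂ hs₂ => hstep n hn s₂ hs₂
        _ = Φ * ∑ n ∈ Finset.Icc 1 ⌊2*𝒩⌋₊, ∑ s₂ ∈ Finset.Icc 1 (2*S),
            (if 𝒩 < (n:ℝ) then ((solFin a sgn c₁ c₂ H s₁ s₂ n).card : ℝ) else 0) := by
            simp_rw [← Finset.mul_sum]
        _ ≤ Φ * (((c₂-c₁)*(H:ℝ)+1)*(𝒩+1)*T) := by
            apply mul_le_mul_of_nonneg_left _ hΦ0
            exact sumB ha hsgn hc₁ hc.le H S s₁ hH 𝒩 h𝒩.le T hT0.le hTfact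
    · rw [if_neg hcase]
      apply le_of_eq
      apply Finset.sum_eq_zero
      intro n _
      apply Finset.sum_eq_zero
      intro s₂ _
      rw [if_neg]
      intro hcond
      exact hcase ⟨hcond.2.1, hcond.2.2.2.1⟩
  refine le_trans (Finset.sum_le_sum fun s₀ hs₀ =>
    Finset.sum_le_sum fun s₁ hs₁ => key s₀ hs₀ s₁ hs₁) ?_
  -- count the (s₀, s₁) pairs
  have hite : ∀ (c : Prop) [Decidable c],
      (if c then Φ * (((c₂-c₁)*(H:ℝ)+1)*(𝒩+1)*T) else 0)
      = Φ * (((c₂-c₁)*(H:ℝ)+1)*(𝒩+1)*T) * (if c then (1:ℝ) else 0) := by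
    intro c inst
    by_cases h : c <;> simp [h]
  have hcount : ∑ s₀ ∈ Finset.Icc 1 (2*S₀), ∑ s₁ ∈ Finset.Icc 1 (2*S),
      (if (S₀:ℝ) < (s₀:ℝ) ∧ (s₁:ℝ) ≤ 2*(S:ℝ)/s₀ then (1:ℝ) else 0) ≤ 2*(S:ℝ) := by
    have hin : ∀ s₀ ∈ Finset.Icc 1 (2*S₀),
        (∑ s₁ ∈ Finset.Icc 1 (2*S),
          (if (S₀:ℝ) < (s₀:ℝ) ∧ (s₁:ℝ) ≤ 2*(S:ℝ)/s₀ then (1:ℝ) else 0))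
        ≤ (if (S₀:ℝ) < (s₀:ℝ) then 2*(S:ℝ)/((S₀:ℝ)+1) else 0) := by
      intro s₀ hs₀
      by_cases h : (S₀:ℝ) < (s₀:ℝ)
      · rw [if_pos h]
        have hs₀pos : (0:ℝ) < (s₀:ℝ) := lt_of_le_of_lt (Nat.cast_nonneg S₀) h
        have hdivnn : (0:ℝ) ≤ 2*(S:ℝ)/s₀ := by positivity
        have hsle : ((S₀:ℝ)+1) ≤ (s₀:ℝ) := by
          have h' : S₀ + 1 ≤ s₀ := Nat.succ_le_of_lt (by exact_mod_cast h)
          exact_mod_cast h'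
        calc (∑ s₁ ∈ Finset.Icc 1 (2*S),
              (if (S₀:ℝ) < (s₀:ℝ) ∧ (s₁:ℝ) ≤ 2*(S:ℝ)/s₀ then (1:ℝ) else 0))
            ≤ ∑ s₁ ∈ Finset.Icc 1 (2*S),
              (if s₁ ∈ Finset.Icc 1 ⌊2*(S:ℝ)/s₀⌋₊ then (1:ℝ) else 0) := by
              apply Finset.sum_le_sum
              intro s₁ hs₁
              by_cases h2 : (S₀:ℝ) < (s₀:ℝ) ∧ (s₁:ℝ) ≤ 2*(S:ℝ)/s₀
              · rw [if_pos h2, if_pos]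
                rw [Finset.mem_Icc]
                exact ⟨(Finset.mem_Icc.mp hs₁).1, Nat.le_floor h2.2⟩
              · rw [if_neg h2]
                by_cases h3 : s₁ ∈ Finset.Icc 1 ⌊2*(S:ℝ)/s₀⌋₊ <;> simp [h3]
          _ ≤ ∑ s₁ ∈ Finset.Icc 1 (2*S) ∪ Finset.Icc 1 ⌊2*(S:ℝ)/s₀⌋₊,
              (if s₁ ∈ Finset.Icc 1 ⌊2*(S:ℝ)/s₀⌋₊ then (1:ℝ) else 0) := by
              apply Finset.sum_le_sum_of_subset_of_nonneg Finset.subset_union_left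
              intro i _ _
              by_cases h3 : i ∈ Finset.Icc 1 ⌊2*(S:ℝ)/s₀⌋₊ <;> simp [h3]
          _ ≤ ∑ s₁ ∈ Finset.Icc 1 ⌊2*(S:ℝ)/s₀⌋₊, (1:ℝ) := by
              rw [Finset.sum_ite_mem]
              apply Finset.sum_le_sum_of_subset_of_nonneg Finset.inter_subset_right
              intro i _ _
              norm_num
          _ = ((⌊2*(S:ℝ)/s₀⌋₊ : ℕ) : ℝ) := by
              rw [Finset.sum_const, Nat.card_Icc, nsmul_eq_mul, mul_one]
              norm_num
          _ ≤ 2*(S:ℝ)/s₀ := Nat.floor_le hdivnn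
          _ ≤ 2*(S:ℝ)/((S₀:ℝ)+1) := by
              rw [div_le_div_iff₀ hs₀pos (by positivity)]
              nlinarith [mul_le_mul_of_nonneg_left hsle (by positivity : (0:ℝ) ≤ 2*(S:ℝ))]
      · rw [if_neg h]
        apply le_of_eq
        apply Finset.sum_eq_zero
        intro s₁ _
        rw [if_neg]
        intro hcond
        exact h hcond.1
    calc ∑ s₀ ∈ Finset.Icc 1 (2*S₀), ∑ s₁ ∈ Finset.Icc 1 (2*S),
          (if (S₀:ℝ) < (s₀:ℝ) ∧ (s₁:ℝ) ≤ 2*(S:ℝ)/s₀ then (1:ℝ) else 0)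
        ≤ ∑ s₀ ∈ Finset.Icc 1 (2*S₀),
          (if (S₀:ℝ) < (s₀:ℝ) then 2*(S:ℝ)/((S₀:ℝ)+1) else 0) := Finset.sum_le_sum hin
      _ ≤ ∑ s₀ ∈ Finset.Icc 1 (2*S₀),
          (if s₀ ∈ Finset.Icc (S₀+1) (2*S₀) then 2*(S:ℝ)/((S₀:ℝ)+1) else 0) := by
          apply Finset.sum_le_sum
          intro s₀ hs₀
          by_cases h : (S₀:ℝ) < (s₀:ℝ)
          · rw [if_pos h, if_pos]
            rw [Finset.mem_Icc]
            refine ⟨?_, (Finset.mem_Icc.mp hs₀).2⟩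
            have : S₀ < s₀ := by exact_mod_cast h
            omega
          · rw [if_neg h]
            by_cases h3 : s₀ ∈ Finset.Icc (S₀+1) (2*S₀) <;> simp [h3] <;> positivity
      _ ≤ ∑ s₀ ∈ Finset.Icc 1 (2*S₀) ∪ Finset.Icc (S₀+1) (2*S₀),
          (if s₀ ∈ Finset.Icc (S₀+1) (2*S₀) then 2*(S:ℝ)/((S₀:ℝ)+1) else 0) := by
          apply Finset.sum_le_sum_of_subset_of_nonneg Finset.subset_union_left
          intro i _ _
          by_cases h3 : i ∈ Finset.Icc (S₀+1) (2*S₀) <;> simp [h3] <;> positivity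
      _ ≤ ∑ s₀ ∈ Finset.Icc (S₀+1) (2*S₀), (2*(S:ℝ)/((S₀:ℝ)+1)) := by
          rw [Finset.sum_ite_mem]
          apply Finset.sum_le_sum_of_subset_of_nonneg Finset.inter_subset_right
          intro i _ _
          positivity
      _ = ((Finset.Icc (S₀+1) (2*S₀)).card : ℝ) * (2*(S:ℝ)/((S₀:ℝ)+1)) := by
          rw [Finset.sum_const, nsmul_eq_mul]
      _ ≤ (S₀:ℝ) * (2*(S:ℝ)/((S₀:ℝ)+1)) := by
          apply mul_le_mul_of_nonneg_right _ (by positivity)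
          rw [Nat.card_Icc]
          have : 2*S₀ + 1 - (S₀+1) ≤ S₀ := by omega
          exact_mod_cast this
      _ ≤ 2*(S:ℝ) := by
          rw [mul_div_assoc', div_le_iff₀ (by positivity)]
          nlinarith [hSR.le, hS₀R.le]
  -- finish
  calc ∑ s₀ ∈ Finset.Icc 1 (2*S₀), ∑ s₁ ∈ Finset.Icc 1 (2*S),
        (if (S₀:ℝ) < (s₀:ℝ) ∧ (s₁:ℝ) ≤ 2*(S:ℝ)/s₀
          then Φ * (((c₂-c₁)*(H:ℝ)+1)*(𝒩+1)*T) else 0)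
      = Φ * (((c₂-c₁)*(H:ℝ)+1)*(𝒩+1)*T) *
        (∑ s₀ ∈ Finset.Icc 1 (2*S₀), ∑ s₁ ∈ Finset.Icc 1 (2*S),
          (if (S₀:ℝ) < (s₀:ℝ) ∧ (s₁:ℝ) ≤ 2*(S:ℝ)/s₀ then (1:ℝ) else 0)) := by
        simp_rw [hite, ← Finset.mul_sum]
    _ ≤ Φ * (((c₂-c₁)*(H:ℝ)+1)*(𝒩+1)*T) * (2*(S:ℝ)) := by
        apply mul_le_mul_of_nonneg_left hcount
        exact mul_nonneg hΦ0 hW0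
    _ ≤ 3*(8*(c₂-c₁)^2+10*(c₂-c₁)+2)*Cd*(4*c₂)^ε * (2+X)^ε * 𝒩 *
        ((H:ℝ)*S + (H:ℝ)^2*S₀) := by
        have hΦS : Φ*(2*(S:ℝ)) = 8*(c₂-c₁)*(H:ℝ)*(S₀:ℝ) + 2*(S:ℝ) := by
          rw [hΦ']
          field_simp
          ring
        have hKnn : (0:ℝ) ≤ c₂ - c₁ := by linarith
        have e1 : (8*(c₂-c₁)*(H:ℝ)*S₀ + 2*S) * ((c₂-c₁)*(H:ℝ)+1)
            ≤ (8*(c₂-c₁)^2+10*(c₂-c₁)+2) * ((H:ℝ)*S + (H:ℝ)^2*S₀) := by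
          nlinarith [mul_nonneg (mul_nonneg hKnn hKnn) (mul_pos hHR hSR).le,
            mul_nonneg (mul_nonneg hKnn hHR.le) hSR.le,
            mul_nonneg hSR.le (by linarith : (0:ℝ) ≤ (H:ℝ) - 1),
            mul_nonneg (mul_nonneg (mul_nonneg hKnn hHR.le) hS₀R.le) (by linarith : (0:ℝ) ≤ (H:ℝ) - 1),
            mul_nonneg (mul_nonneg hKnn (mul_pos hHR hHR).le) hS₀R.le,
            mul_nonneg (mul_pos hHR hHR).le hS₀R.le,
            mul_nonneg (mul_nonneg (mul_nonneg hKnn hKnn) (mul_pos hHR hSR).le) hSR.le,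
            mul_nonneg (mul_nonneg (mul_nonneg hKnn hKnn) (mul_pos hHR hHR).le) hS₀R.le]
        have e2 : 𝒩 + 1 ≤ 3*𝒩 := by linarith
        have hE : Φ * (((c₂-c₁)*(H:ℝ)+1)*(𝒩+1)*T) * (2*(S:ℝ))
            = ((8*(c₂-c₁)*(H:ℝ)*S₀ + 2*S) * ((c₂-c₁)*(H:ℝ)+1)) * ((𝒩+1)*T) := by
          calc Φ * (((c₂-c₁)*(H:ℝ)+1)*(𝒩+1)*T) * (2*(S:ℝ))
              = (Φ*(2*(S:ℝ))) * (((c₂-c₁)*(H:ℝ)+1)*((𝒩+1)*T)) := by ring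
            _ = ((8*(c₂-c₁)*(H:ℝ)*S₀ + 2*S) * ((c₂-c₁)*(H:ℝ)+1)) * ((𝒩+1)*T) := by
                rw [hΦS]; ring
        rw [hE]
        have hWnn : (0:ℝ) ≤ (𝒩+1)*T := mul_nonneg (by linarith) hT0.le
        calc ((8*(c₂-c₁)*(H:ℝ)*S₀ + 2*S) * ((c₂-c₁)*(H:ℝ)+1)) * ((𝒩+1)*T)
            ≤ ((8*(c₂-c₁)^2+10*(c₂-c₁)+2) * ((H:ℝ)*S + (H:ℝ)^2*S₀)) * ((𝒩+1)*T) :=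
              mul_le_mul_of_nonneg_right e1 hWnn
          _ ≤ ((8*(c₂-c₁)^2+10*(c₂-c₁)+2) * ((H:ℝ)*S + (H:ℝ)^2*S₀)) * ((3*𝒩)*T) := by
              apply mul_le_mul_of_nonneg_left _ ?_
              · exact mul_le_mul_of_nonneg_right e2 hT0.le
              · have h1 : (0:ℝ) < 8*(c₂-c₁)^2+10*(c₂-c₁)+2 := by nlinarith
                positivity
          _ = 3*(8*(c₂-c₁)^2+10*(c₂-c₁)+2)*Cd*(4*c₂)^ε * (2+X)^ε * 𝒩 *
              ((H:ℝ)*S + (H:ℝ)^2*S₀) := by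
              rw [hT']; ring
end

section
/- Let δ ∈ (0, 10⁻⁵), x > 1, ϑ ∈ [1/2, 5/8], x^{2δ} ≤ N ≤ x^{1/3+δ}, r ≥ 3, 1 ≤ D ≤ x^{ϑ−2δ}, v := 2ϑ−1, u := (2−2ϑ)/3. Let d = p₁⋯p_r with primes p₁ ≥ ⋯ ≥ p_r and p₁⋯p_{j−1}p_j² ≤ D for all j ≤ r. Assume p₃ ≤ x^{u−v}, and assume either (p₁ ≤ x^v and p₂² ≤ x^{1−ϑ−2δ}) or (p₂ ≤ x^v and p₁² ≤ x^{1−ϑ−2δ}). Then there is a factorization d = d₁d₂d₃ into positive integers with d₁ ≤ N x^{−δ}, N² d₂ d₃² ≤ x^{1−δ}, and N² d₂⁵ d₃² ≤ x^{2−δ}. -/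
/-!
Distribute the primes greedily over `d₁ ≤ A := N x^{-δ}`, `d₂` and `d₃`. As long as `d₂ ≤ x^v` and
`N d₃ ≤ x^{1-ϑ-δ}`, both target bounds hold (this is where `ϑ ≤ 5/8` enters). When a prime fits into
neither `d₁` nor `d₂`, `d₂ p` lands in `[x^v, x^u]` because `p ≤ p₃ ≤ x^{u-v}`, and `d₂` is frozen from
then on: for a prime `p` with `d₁ p > A`, the budget `d₁ d₂ d₃ p² ≤ D ≤ x^{ϑ-2δ}` forces the target
bounds for `(d₂, d₃ p)`, so `p` goes into `d₃`.
-/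

open Finset

section Greedy

variable {M : Type*} [CommMonoid M] {r : ℕ}

lemma prod_filter_val_lt_succ (p : Fin r → M) {n : ℕ} (hn : n < r) :
    ∏ i ∈ univ.filter (fun i : Fin r => (i : ℕ) < n + 1), p i =
      (∏ i ∈ univ.filter (fun i : Fin r => (i : ℕ) < n), p i) * p ⟨n, hn⟩ := by
  have hinsert : univ.filter (fun i : Fin r => (i : ℕ) < n + 1) =
      insert ⟨n, hn⟩ (univ.filter (fun i : Fin r => (i : ℕ) < n)) := by
    ext i
    simp only [mem_filter, mem_univ, true_and, mem_insert, Fin.ext_iff]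
    omega
  rw [hinsert, prod_insert (by simp), mul_comm]

lemma prod_filter_val_lt_two (p : Fin r → M) (hr : 2 ≤ r) :
    ∏ i ∈ univ.filter (fun i : Fin r => (i : ℕ) < 2), p i = p ⟨0, by omega⟩ * p ⟨1, by omega⟩ := by
  rw [prod_filter_val_lt_succ p (by omega), prod_filter_val_lt_succ p (by omega),
    filter_false_of_mem (by simp), prod_empty, one_mul]

theorem exists_mul_mul_eq_prod_of_step {k : ℕ} (hk : k ≤ r) (p : Fin r → M)
    (P : M → M → M → Prop)
    (hbase : ∃ a b c, a * b * c = ∏ i ∈ univ.filter (fun i : Fin r => (i : ℕ) < k), p i ∧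
      P a b c)
    (hstep : ∀ j : Fin r, k ≤ (j : ℕ) → ∀ a b c, a * b * c = ∏ i ∈ univ.filter (· < j), p i →
      P a b c → P (a * p j) b c ∨ P a (b * p j) c ∨ P a b (c * p j)) :
    ∃ a b c, a * b * c = ∏ i, p i ∧ P a b c := by
  suffices h : ∀ n, k ≤ n → n ≤ r → ∃ a b c,
      a * b * c = ∏ i ∈ univ.filter (fun i : Fin r => (i : ℕ) < n), p i ∧ P a b c by
    simpa using h r hk le_rfl
  intro n hkn
  induction n, hkn using Nat.le_induction with
  | base => exact fun _ => hbase
  | succ n hkn ih =>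
    intro hn
    obtain ⟨a, b, c, habc, hP⟩ := ih (by omega)
    have hfilter : univ.filter (· < (⟨n, hn⟩ : Fin r)) =
        univ.filter (fun i : Fin r => (i : ℕ) < n) := by
      ext; simp [Fin.lt_def]
    rw [prod_filter_val_lt_succ p hn, ← habc]
    rcases hstep ⟨n, hn⟩ hkn a b c (hfilter ▸ habc) hP with h | h | h
    · exact ⟨_, _, _, by ac_rfl, h⟩
    · exact ⟨_, _, _, by ac_rfl, h⟩
    · exact ⟨_, _, _, by ac_rfl, h⟩

end Greedy

section Invariant

variable {N A B C U D T₁ T₂ : ℝ}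

lemma target_bounds_of_le (hA : 0 < A) (hT₁ : 0 ≤ T₁) (hT₂ : 0 ≤ T₂)
    (h₁ : N ^ 2 * D ^ 2 ≤ A ^ 2 * B * T₁) (h₂ : N ^ 2 * D ^ 2 * U ^ 3 ≤ A ^ 2 * T₂)
    {a b c : ℝ} (ha : A ≤ a) (hBb : B ≤ b) (hbU : b ≤ U) (hb : 0 < b) (hc : 0 ≤ c)
    (hD : a * b * c ≤ D) :
    N ^ 2 * b * c ^ 2 ≤ T₁ ∧ N ^ 2 * b ^ 5 * c ^ 2 ≤ T₂ := by
  have ha0 : 0 < a := hA.trans_le ha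
  have hND : N ^ 2 * (a * b * c) ^ 2 ≤ N ^ 2 * D ^ 2 := by gcongr
  have hA2 : A ^ 2 ≤ a ^ 2 := by gcongr
  constructor
  · have hAB : A ^ 2 * B ≤ a ^ 2 * b :=
      calc A ^ 2 * B ≤ A ^ 2 * b := by gcongr
        _ ≤ a ^ 2 * b := by gcongr
    refine le_of_mul_le_mul_left ?_ (by positivity : 0 < a ^ 2 * b)
    calc a ^ 2 * b * (N ^ 2 * b * c ^ 2) = N ^ 2 * (a * b * c) ^ 2 := by ring
      _ ≤ A ^ 2 * B * T₁ := hND.trans h₁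
      _ ≤ a ^ 2 * b * T₁ := by gcongr ?_ * _
  · refine le_of_mul_le_mul_left ?_ (by positivity : 0 < a ^ 2)
    calc a ^ 2 * (N ^ 2 * b ^ 5 * c ^ 2) = N ^ 2 * (a * b * c) ^ 2 * b ^ 3 := by ring
      _ ≤ N ^ 2 * D ^ 2 * U ^ 3 := by gcongr
      _ ≤ A ^ 2 * T₂ := h₂
      _ ≤ a ^ 2 * T₂ := by gcongr

/-- In the first phase `b ≤ B` and `N c ≤ C`; in the second, `b ∈ [B, U]` is frozen and only `a`
and `c` grow. -/
def GreedyInvariant (N A B C U T₁ T₂ : ℝ) (a b c : ℕ) : Prop :=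
  (a : ℝ) ≤ A ∧ (((b : ℝ) ≤ B ∧ N * c ≤ C) ∨
    (B ≤ b ∧ (b : ℝ) ≤ U ∧ N ^ 2 * b * (c : ℝ) ^ 2 ≤ T₁ ∧ N ^ 2 * (b : ℝ) ^ 5 * (c : ℝ) ^ 2 ≤ T₂))

lemma greedyInvariant_base (hN : 0 < N) (hA : 1 ≤ A) (hNC : N ≤ C) {s w : ℕ}
    (hs : (s : ℝ) ≤ B) (hw : N * (w : ℝ) ^ 2 ≤ A * C) :
    ∃ a c : ℕ, a * c = w ∧ GreedyInvariant N A B C U T₁ T₂ a s c := by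
  by_cases hwC : N * w ≤ C
  · exact ⟨1, w, one_mul w, by simpa using hA, Or.inl ⟨hs, hwC⟩⟩
  · refine ⟨w, 1, mul_one w, ?_, Or.inl ⟨hs, by simpa using hNC⟩⟩
    -- `N w² ≤ A C < A (N w)`
    nlinarith

lemma GreedyInvariant.step (hA : 0 < A) (hT₁ : 0 ≤ T₁) (hT₂ : 0 ≤ T₂)
    (h₁ : N ^ 2 * D ^ 2 ≤ A ^ 2 * B * T₁) (h₂ : N ^ 2 * D ^ 2 * U ^ 3 ≤ A ^ 2 * T₂)
    {a b c q : ℕ} (hb : 0 < b) (hq : 0 < q) (hqU : B * q ≤ U)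
    (hD : (a : ℝ) * b * c * q ^ 2 ≤ D) (h : GreedyInvariant N A B C U T₁ T₂ a b c) :
    GreedyInvariant N A B C U T₁ T₂ (a * q) b c ∨ GreedyInvariant N A B C U T₁ T₂ a (b * q) c ∨
      GreedyInvariant N A B C U T₁ T₂ a b (c * q) := by
  unfold GreedyInvariant at h ⊢
  push_cast
  obtain ⟨ha, hphase⟩ := h
  by_cases haq : (a : ℝ) * q ≤ A
  · exact Or.inl ⟨haq, hphase⟩
  rw [not_le] at haq
  rcases hphase with ⟨hbB, hc⟩ | ⟨hBb, hbU, -⟩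
  · by_cases hbq : (b : ℝ) * q ≤ B
    · exact Or.inr (Or.inl ⟨ha, Or.inl ⟨hbq, hc⟩⟩)
    have hbqU : (b : ℝ) * q ≤ U := (mul_le_mul_of_nonneg_right hbB (by positivity)).trans hqU
    refine Or.inr (Or.inl ⟨ha, Or.inr ⟨(not_le.1 hbq).le, hbqU, ?_⟩⟩)
    exact target_bounds_of_le hA hT₁ hT₂ h₁ h₂ haq.le (not_le.1 hbq).le hbqU (by positivity)
      (by positivity) ((by ring : (a : ℝ) * q * (b * q) * c = _).trans_le hD)
  · refine Or.inr (Or.inr ⟨ha, Or.inr ⟨hBb, hbU, ?_⟩⟩)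
    exact target_bounds_of_le hA hT₁ hT₂ h₁ h₂ haq.le hBb hbU (by positivity) (by positivity)
      ((by ring : (a : ℝ) * q * b * (c * q) = _).trans_le hD)

lemma GreedyInvariant.target_bounds (hN : 0 ≤ N) (hB₁ : B * C ^ 2 ≤ T₁)
    (hB₂ : B ^ 5 * C ^ 2 ≤ T₂) {a b c : ℕ} (h : GreedyInvariant N A B C U T₁ T₂ a b c) :
    (a : ℝ) ≤ A ∧ N ^ 2 * b * (c : ℝ) ^ 2 ≤ T₁ ∧ N ^ 2 * (b : ℝ) ^ 5 * (c : ℝ) ^ 2 ≤ T₂ := by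
  refine ⟨h.1, ?_⟩
  rcases h.2 with ⟨hbB, hc⟩ | ⟨-, -, hbounds⟩
  · have hB : 0 ≤ B := (Nat.cast_nonneg b).trans hbB
    have hNc : (N * c) ^ 2 ≤ C ^ 2 := by gcongr
    constructor
    · calc N ^ 2 * b * (c : ℝ) ^ 2 = b * (N * c) ^ 2 := by ring
        _ ≤ B * C ^ 2 := by gcongr
        _ ≤ T₁ := hB₁
    · calc N ^ 2 * (b : ℝ) ^ 5 * (c : ℝ) ^ 2 = b ^ 5 * (N * c) ^ 2 := by ring
        _ ≤ B ^ 5 * C ^ 2 := by gcongr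
        _ ≤ T₂ := hB₂
  · exact hbounds

end Invariant

lemma pos_of_mul_mul_eq_prod {ι : Type*} {s : Finset ι} {f : ι → ℕ} (hf : ∀ i ∈ s, 0 < f i)
    {a b c : ℕ} (h : a * b * c = ∏ i ∈ s, f i) : 0 < a ∧ 0 < b ∧ 0 < c := by
  have hprod := prod_pos hf
  rw [← h, CanonicallyOrderedAdd.mul_pos, CanonicallyOrderedAdd.mul_pos] at hprod
  exact ⟨hprod.1.1, hprod.1.2, hprod.2⟩

section Factorization

variable {N A B C U D T₁ T₂ : ℝ}

theorem exists_factorization_of_greedy_bounds (hN : 0 < N) (hA : 1 ≤ A) (hNC : N ≤ C)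
    (hT₁ : 0 ≤ T₁) (hT₂ : 0 ≤ T₂)
    (h₁ : N ^ 2 * D ^ 2 ≤ A ^ 2 * B * T₁) (h₂ : N ^ 2 * D ^ 2 * U ^ 3 ≤ A ^ 2 * T₂)
    (hB₁ : B * C ^ 2 ≤ T₁) (hB₂ : B ^ 5 * C ^ 2 ≤ T₂)
    {r : ℕ} (hr : 2 ≤ r) (p : Fin r → ℕ) (hp : ∀ i, 0 < p i)
    (hwell : ∀ j : Fin r, ((∏ i ∈ univ.filter (· < j), p i : ℕ) : ℝ) * (p j : ℝ) ^ 2 ≤ D)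
    (hq : ∀ j : Fin r, 2 ≤ (j : ℕ) → B * p j ≤ U)
    (hfirst : ∃ s w : ℕ, s * w = p ⟨0, by omega⟩ * p ⟨1, by omega⟩ ∧ (s : ℝ) ≤ B ∧
      N * (w : ℝ) ^ 2 ≤ A * C) :
    ∃ d₁ d₂ d₃ : ℕ, 0 < d₁ ∧ 0 < d₂ ∧ 0 < d₃ ∧ d₁ * d₂ * d₃ = ∏ i, p i ∧
      (d₁ : ℝ) ≤ A ∧ N ^ 2 * (d₂ : ℝ) * (d₃ : ℝ) ^ 2 ≤ T₁ ∧
      N ^ 2 * (d₂ : ℝ) ^ 5 * (d₃ : ℝ) ^ 2 ≤ T₂ := by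
  obtain ⟨s, w, hsw, hs, hw⟩ := hfirst
  obtain ⟨a, c, hac, hbase⟩ := greedyInvariant_base (U := U) (T₁ := T₁) (T₂ := T₂) hN hA hNC hs hw
  have hstart : a * s * c = ∏ i ∈ univ.filter (fun i : Fin r => (i : ℕ) < 2), p i := by
    rw [prod_filter_val_lt_two p hr, ← hsw, ← hac, mul_right_comm, mul_comm]
  obtain ⟨d₁, d₂, d₃, hd, hinv⟩ := exists_mul_mul_eq_prod_of_step hr p _ ⟨a, s, c, hstart, hbase⟩
    fun j hj a b c habc h => by
      refine h.step (by linarith) hT₁ hT₂ h₁ h₂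
        (pos_of_mul_mul_eq_prod (fun i _ => hp i) habc).2.1 (hp j) (hq j hj) ?_
      simpa only [← habc, Nat.cast_mul] using hwell j
  obtain ⟨hd₁, hd₂, hd₃⟩ := pos_of_mul_mul_eq_prod (fun i _ => hp i) hd
  exact ⟨d₁, d₂, d₃, hd₁, hd₂, hd₃, hd, hinv.target_bounds hN.le hB₁ hB₂⟩

end Factorization

section RpowBounds

variable {x δ ϑ N D : ℝ}

lemma one_le_mul_rpow_neg (hx : 1 ≤ x) (hδ : 0 ≤ δ) (hN : x ^ (2 * δ) ≤ N) :
    1 ≤ N * x ^ (-δ) :=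
  calc (1 : ℝ) ≤ x ^ (2 * δ) * x ^ (-δ) := by
        rw [← Real.rpow_add (by linarith)]
        exact Real.one_le_rpow hx (by linarith)
    _ ≤ N * x ^ (-δ) := by gcongr

lemma sq_mul_sq_le_rpow (hx : 1 < x) (hδ : 0 ≤ δ) (hD : 0 ≤ D) (hD2 : D ≤ x ^ (ϑ - 2 * δ)) :
    N ^ 2 * D ^ 2 ≤ (N * x ^ (-δ)) ^ 2 * x ^ (2 * ϑ - 1) * x ^ (1 - δ) := by
  have hx0 : 0 < x := by linarith
  calc N ^ 2 * D ^ 2 ≤ N ^ 2 * (x ^ (ϑ - 2 * δ)) ^ 2 := by gcongr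
    _ ≤ N ^ 2 * ((x ^ (-δ)) ^ 2 * x ^ (2 * ϑ - 1) * x ^ (1 - δ)) := by
      gcongr N ^ 2 * ?_
      simp only [← Real.rpow_natCast, ← Real.rpow_mul hx0.le, ← Real.rpow_add hx0]
      exact Real.rpow_le_rpow_of_exponent_le hx.le (by push_cast; linarith)
    _ = _ := by ring

lemma sq_mul_sq_mul_cube_le_rpow (hx : 1 < x) (hδ : 0 ≤ δ) (hD : 0 ≤ D)
    (hD2 : D ≤ x ^ (ϑ - 2 * δ)) :
    N ^ 2 * D ^ 2 * (x ^ ((2 - 2 * ϑ) / 3)) ^ 3 ≤ (N * x ^ (-δ)) ^ 2 * x ^ (2 - δ) := by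
  have hx0 : 0 < x := by linarith
  calc N ^ 2 * D ^ 2 * (x ^ ((2 - 2 * ϑ) / 3)) ^ 3
      ≤ N ^ 2 * ((x ^ (ϑ - 2 * δ)) ^ 2 * (x ^ ((2 - 2 * ϑ) / 3)) ^ 3) := by
        rw [mul_assoc]; gcongr
    _ ≤ N ^ 2 * ((x ^ (-δ)) ^ 2 * x ^ (2 - δ)) := by
      gcongr N ^ 2 * ?_
      simp only [← Real.rpow_natCast, ← Real.rpow_mul hx0.le, ← Real.rpow_add hx0]
      exact Real.rpow_le_rpow_of_exponent_le hx.le (by push_cast; linarith)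
    _ = _ := by ring

end RpowBounds

/-- Three-factor greedy algorithm: with `0 < δ < 10⁻⁵`, `ϑ ∈ [1/2, 5/8]`,
`x^{2δ} ≤ N ≤ x^{1/3+δ}`, `r ≥ 3`, `1 ≤ D ≤ x^{ϑ−2δ}`, `v := 2ϑ−1`, `u := (2−2ϑ)/3`:
if `d = p₁⋯p_r` (primes `p₁ ≥ ⋯ ≥ p_r`, `p₁⋯p_{j−1}p_j² ≤ D` for all `j ≤ r`),
`p₃ ≤ x^{u−v}`, and either (`p₁ ≤ x^v` and `p₂² ≤ x^{1−ϑ−2δ}`) or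
(`p₂ ≤ x^v` and `p₁² ≤ x^{1−ϑ−2δ}`), then there is a factorization `d = d₁d₂d₃` with
`d₁ ≤ N x^{−δ}`, `N²d₂d₃² ≤ x^{1−δ}`, `N²d₂⁵d₃² ≤ x^{2−δ}`. -/
theorem three_factor_greedy (δ x ϑ N D : ℝ) (hδ : 0 < δ) (hδ' : δ < 1 / 100000)
    (hx : 1 < x) (hϑ2 : ϑ ≤ 5 / 8)
    (hN1 : x ^ (2 * δ) ≤ N) (hN2 : N ≤ x ^ ((1 : ℝ) / 3 + δ))
    (hD1 : 1 ≤ D) (hD2 : D ≤ x ^ (ϑ - 2 * δ))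
    (r : ℕ) (hr : 3 ≤ r) (p : Fin r → ℕ) (hp : ∀ i, (p i).Prime)
    (hmono : ∀ i j : Fin r, i ≤ j → p j ≤ p i)
    (hwell : ∀ j : Fin r,
      ((∏ i ∈ Finset.univ.filter (· < j), p i : ℕ) : ℝ) * (p j : ℝ) ^ 2 ≤ D)
    (hp₃ : (p ⟨2, by omega⟩ : ℝ) ≤ x ^ ((2 - 2 * ϑ) / 3 - (2 * ϑ - 1)))
    (hcase :
      ((p ⟨0, by omega⟩ : ℝ) ≤ x ^ (2 * ϑ - 1) ∧
        (p ⟨1, by omega⟩ : ℝ) ^ 2 ≤ x ^ (1 - ϑ - 2 * δ)) ∨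
      ((p ⟨1, by omega⟩ : ℝ) ≤ x ^ (2 * ϑ - 1) ∧
        (p ⟨0, by omega⟩ : ℝ) ^ 2 ≤ x ^ (1 - ϑ - 2 * δ))) :
    ∃ d₁ d₂ d₃ : ℕ, 0 < d₁ ∧ 0 < d₂ ∧ 0 < d₃ ∧ d₁ * d₂ * d₃ = ∏ i, p i ∧
      (d₁ : ℝ) ≤ N * x ^ (-δ) ∧
      N ^ 2 * (d₂ : ℝ) * (d₃ : ℝ) ^ 2 ≤ x ^ (1 - δ) ∧
      N ^ 2 * (d₂ : ℝ) ^ 5 * (d₃ : ℝ) ^ 2 ≤ x ^ (2 - δ) := by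
  have hx0 : 0 < x := by linarith
  have hN : 0 < N := (Real.rpow_pos_of_pos hx0 _).trans_le hN1
  have hx_rpow : ∀ {s t : ℝ}, s ≤ t → x ^ s ≤ x ^ t := Real.rpow_le_rpow_of_exponent_le hx.le
  have hB₁ : x ^ (2 * ϑ - 1) * (x ^ (1 - ϑ - δ)) ^ 2 ≤ x ^ (1 - δ) := by
    simp only [← Real.rpow_natCast, ← Real.rpow_mul hx0.le, ← Real.rpow_add hx0]
    exact hx_rpow (by push_cast; linarith)
  have hB₂ : (x ^ (2 * ϑ - 1)) ^ 5 * (x ^ (1 - ϑ - δ)) ^ 2 ≤ x ^ (2 - δ) := by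
    simp only [← Real.rpow_natCast, ← Real.rpow_mul hx0.le, ← Real.rpow_add hx0]
    exact hx_rpow (by push_cast; linarith)
  have hq : ∀ j : Fin r, 2 ≤ (j : ℕ) → x ^ (2 * ϑ - 1) * p j ≤ x ^ ((2 - 2 * ϑ) / 3) := by
    intro j hj
    calc x ^ (2 * ϑ - 1) * p j ≤ x ^ (2 * ϑ - 1) * x ^ ((2 - 2 * ϑ) / 3 - (2 * ϑ - 1)) := by
          gcongr
          exact (Nat.cast_le.2 (hmono ⟨2, by omega⟩ j hj)).trans hp₃
      _ = x ^ ((2 - 2 * ϑ) / 3) := by rw [← Real.rpow_add hx0]; ring_nf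
  have hfirst : ∃ s w : ℕ, s * w = p ⟨0, by omega⟩ * p ⟨1, by omega⟩ ∧
      (s : ℝ) ≤ x ^ (2 * ϑ - 1) ∧ N * (w : ℝ) ^ 2 ≤ N * x ^ (-δ) * x ^ (1 - ϑ - δ) := by
    rw [mul_assoc, ← Real.rpow_add hx0, show -δ + (1 - ϑ - δ) = 1 - ϑ - 2 * δ by ring]
    rcases hcase with ⟨hs, hw⟩ | ⟨hs, hw⟩
    · exact ⟨_, _, rfl, hs, by gcongr⟩
    · exact ⟨_, _, mul_comm _ _, hs, by gcongr⟩
  exact exists_factorization_of_greedy_bounds hN (one_le_mul_rpow_neg hx.le hδ.le hN1)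
    (hN2.trans (hx_rpow (by linarith))) (by positivity) (by positivity)
    (sq_mul_sq_le_rpow hx hδ.le (by linarith) hD2)
    (sq_mul_sq_mul_cube_le_rpow hx hδ.le (by linarith) hD2) hB₁ hB₂ (by omega) p
    (fun i => (hp i).pos) hwell hq hfirst
end
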